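/- arXiv:2009.14250 — 5 statements merged into one kernel-verified Lean document; each statement's English description precedes it below -/
import Mathlib

section
/- If ψ: ℝ₊ → ℝ₊ is such that the map t ↦ ψ(t²) is L₁-Lipschitz on ℝ, ψ is differentiable on [0,1) with ψ'(0) < 0 and ψ' being L₂-Lipschitz on [0,1), then ψ itself is L₃-Lipschitz on ℝ₊ with L₃ = max(L₂ + c₀, L₁/2), where c₀ = -ψ'(0). -/
/-- If `ψ : ℝ₊ → ℝ₊` is such that `t ↦ ψ(t²)` is `L₁`-Lipschitz on `ℝ`,
`ψ` is differentiable on `[0,1)` with `ψ'(0) < 0` and `ψ'` is `L₂`-Lipschitz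
on `[0,1)`, then `ψ` is `L₃`-Lipschitz on `ℝ₊` with
`L₃ = max (L₂ + c₀) (L₁/2)`, where `c₀ = -ψ'(0)`. -/
theorem stmt0 (ψ ψ' : ℝ → ℝ) (L₁ L₂ : ℝ)
    (hψ_nonneg : ∀ t, 0 ≤ t → 0 ≤ ψ t)
    (hL₁ : ∀ s t : ℝ, |ψ (s ^ 2) - ψ (t ^ 2)| ≤ L₁ * |s - t|)
    (hderiv : ∀ t ∈ Set.Ico (0 : ℝ) 1,
      HasDerivWithinAt ψ (ψ' t) (Set.Ico (0 : ℝ) 1) t)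
    (hψ'0 : ψ' 0 < 0)
    (hL₂ : ∀ s ∈ Set.Ico (0 : ℝ) 1, ∀ t ∈ Set.Ico (0 : ℝ) 1,
      |ψ' s - ψ' t| ≤ L₂ * |s - t|) :
    ∀ s t : ℝ, 0 ≤ s → 0 ≤ t →
      |ψ s - ψ t| ≤ max (L₂ + (-ψ' 0)) (L₁ / 2) * |s - t| := by
  have hc0 : (0:ℝ) < -ψ' 0 := by linarith
  have hmem0 : (0:ℝ) ∈ Set.Ico (0:ℝ) 1 := ⟨le_refl 0, one_pos⟩
  have hL₂0 : 0 ≤ L₂ := by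
    have h := hL₂ 0 hmem0 (1/2) ⟨by norm_num, by norm_num⟩
    have h0 : (0:ℝ) ≤ L₂ * |(0:ℝ) - 1/2| := le_trans (abs_nonneg _) h
    rw [show |(0:ℝ) - 1/2| = 1/2 by norm_num] at h0
    linarith
  have hL₁0 : 0 ≤ L₁ := by
    have h := hL₁ 0 1
    have h0 : (0:ℝ) ≤ L₁ * |(0:ℝ) - 1| := le_trans (abs_nonneg _) h
    rw [show |(0:ℝ) - 1| = 1 by norm_num] at h0
    linarith
  set K := L₂ + (-ψ' 0) with hKdef
  set M := max (L₂ + (-ψ' 0)) (L₁/2) with hMdef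
  have hK0 : 0 ≤ K := by rw [hKdef]; linarith
  have hKM : K ≤ M := le_max_left _ _
  have hLM : L₁/2 ≤ M := le_max_right _ _
  -- derivative bound
  have hbound : ∀ u ∈ Set.Ico (0:ℝ) 1, ‖ψ' u‖ ≤ K := by
    intro u hu
    have h := hL₂ u hu 0 hmem0
    rw [Real.norm_eq_abs]
    have h1 : |ψ' u| ≤ |ψ' u - ψ' 0| + |ψ' 0| := by
      calc |ψ' u| = |ψ' u - ψ' 0 + ψ' 0| := by ring_nf
        _ ≤ _ := abs_add_le _ _
    have habs0 : |ψ' 0| = -ψ' 0 := abs_of_neg hψ'0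
    have hu0 : |u - 0| = u := by rw [sub_zero, abs_of_nonneg hu.1]
    rw [hu0] at h
    have h2 : L₂ * u ≤ L₂ := by nlinarith [hu.1, hu.2]
    rw [habs0] at h1
    rw [hKdef]
    linarith
  -- Lipschitz on [0,1)
  have hIco : ∀ s ∈ Set.Ico (0:ℝ) 1, ∀ t ∈ Set.Ico (0:ℝ) 1,
      |ψ s - ψ t| ≤ K * |s - t| := by
    intro s hs t ht
    have h := (convex_Ico (0:ℝ) 1).norm_image_sub_le_of_norm_hasDerivWithin_le
      hderiv hbound ht hs
    simpa [Real.norm_eq_abs] using h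
  -- continuity of ψ on nonneg reals via t ↦ ψ(t²)
  have hF : Continuous fun a : ℝ => ψ (a^2) := by
    have hlip : LipschitzWith (Real.toNNReal L₁) (fun a : ℝ => ψ (a^2)) := by
      apply LipschitzWith.of_dist_le_mul
      intro a b
      simp only [Real.dist_eq]
      calc |ψ (a^2) - ψ (b^2)| ≤ L₁ * |a - b| := hL₁ a b
        _ = Real.toNNReal L₁ * |a - b| := by
            rw [Real.coe_toNNReal _ hL₁0]
    exact hlip.continuous
  have hG : Continuous fun u : ℝ => ψ (Real.sqrt u ^ 2) := hF.comp Real.continuous_sqrt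
  -- endpoint extension
  have hψ1 : ∀ s ∈ Set.Ico (0:ℝ) 1, |ψ s - ψ 1| ≤ K * (1 - s) := by
    intro s hs
    have hne : (nhdsWithin (1:ℝ) (Set.Ico (0:ℝ) 1)).NeBot := by
      rw [← mem_closure_iff_nhdsWithin_neBot, closure_Ico (by norm_num : (0:ℝ) ≠ 1)]
      exact ⟨zero_le_one, le_refl 1⟩
    have htend : Filter.Tendsto ψ (nhdsWithin (1:ℝ) (Set.Ico (0:ℝ) 1)) (nhds (ψ 1)) := by
      have h1 : Filter.Tendsto (fun u => ψ (Real.sqrt u ^ 2))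
          (nhdsWithin (1:ℝ) (Set.Ico (0:ℝ) 1)) (nhds (ψ (Real.sqrt 1 ^ 2))) :=
        (hG.tendsto 1).mono_left nhdsWithin_le_nhds
      rw [Real.sqrt_one, one_pow] at h1
      refine h1.congr' (Filter.eventuallyEq_of_mem self_mem_nhdsWithin ?_)
      intro u hu
      show ψ (Real.sqrt u ^ 2) = ψ u
      rw [Real.sq_sqrt hu.1]
    have htend2 : Filter.Tendsto (fun u => |ψ s - ψ u|)
        (nhdsWithin (1:ℝ) (Set.Ico (0:ℝ) 1)) (nhds (|ψ s - ψ 1|)) :=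
      (Filter.Tendsto.sub tendsto_const_nhds htend).abs
    refine le_of_tendsto htend2 ?_
    have hgt : ∀ᶠ u in nhdsWithin (1:ℝ) (Set.Ico (0:ℝ) 1), s < u :=
      Filter.Eventually.filter_mono nhdsWithin_le_nhds (eventually_gt_nhds hs.2)
    filter_upwards [self_mem_nhdsWithin, hgt] with u hu hsu
    calc |ψ s - ψ u| ≤ K * |s - u| := hIco s hs u hu
      _ = K * (u - s) := by rw [abs_sub_comm, abs_of_pos (by linarith)]
      _ ≤ K * (1 - s) := by nlinarith [hu.2]
  -- Lipschitz on [1,∞)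
  have hB : ∀ s t : ℝ, 1 ≤ s → 1 ≤ t → |ψ s - ψ t| ≤ L₁/2 * |s - t| := by
    intro s t hs ht
    have h0s : (0:ℝ) ≤ s := by linarith
    have h0t : (0:ℝ) ≤ t := by linarith
    have h1 := hL₁ (Real.sqrt s) (Real.sqrt t)
    rw [Real.sq_sqrt h0s, Real.sq_sqrt h0t] at h1
    have hs2 := Real.sq_sqrt h0s
    have ht2 := Real.sq_sqrt h0t
    have hss : 1 ≤ Real.sqrt s := by
      rw [show (1:ℝ) = Real.sqrt 1 by rw [Real.sqrt_one]]
      exact Real.sqrt_le_sqrt hs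
    have hts : 1 ≤ Real.sqrt t := by
      rw [show (1:ℝ) = Real.sqrt 1 by rw [Real.sqrt_one]]
      exact Real.sqrt_le_sqrt ht
    have key : (Real.sqrt s - Real.sqrt t) * (Real.sqrt s + Real.sqrt t) = s - t := by
      nlinarith [hs2, ht2]
    have hsum : (0:ℝ) ≤ Real.sqrt s + Real.sqrt t := by linarith
    have hsq : |Real.sqrt s - Real.sqrt t| * (Real.sqrt s + Real.sqrt t) = |s - t| := by
      rw [← key, abs_mul, abs_of_nonneg hsum]
    have hsum2 : (2:ℝ) ≤ Real.sqrt s + Real.sqrt t := by linarith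
    nlinarith [mul_nonneg hL₁0 (abs_nonneg (Real.sqrt s - Real.sqrt t)), hsum2, hsq, h1,
      abs_nonneg (Real.sqrt s - Real.sqrt t)]
  -- main combination for s ≤ t
  have main : ∀ s t : ℝ, 0 ≤ s → s ≤ t → |ψ s - ψ t| ≤ M * |s - t| := by
    intro s t hs hst
    rcases lt_or_ge t 1 with ht1 | ht1
    · have h := hIco s ⟨hs, lt_of_le_of_lt hst ht1⟩ t ⟨le_trans hs hst, ht1⟩
      calc |ψ s - ψ t| ≤ K * |s - t| := h
        _ ≤ M * |s - t| := mul_le_mul_of_nonneg_right hKM (abs_nonneg _)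
    · rcases le_or_gt 1 s with hs1 | hs1
      · have h := hB s t hs1 ht1
        calc |ψ s - ψ t| ≤ L₁/2 * |s - t| := h
          _ ≤ M * |s - t| := mul_le_mul_of_nonneg_right hLM (abs_nonneg _)
      · have h1 := hψ1 s ⟨hs, hs1⟩
        have h2 := hB 1 t le_rfl ht1
        have h2' : |ψ 1 - ψ t| ≤ L₁/2 * (t - 1) := by
          rwa [show |(1:ℝ) - t| = t - 1 by rw [abs_sub_comm, abs_of_nonneg (by linarith)]] at h2
        have htri : |ψ s - ψ t| ≤ |ψ s - ψ 1| + |ψ 1 - ψ t| := abs_sub_le _ _ _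
        have habs : |s - t| = t - s := by rw [abs_sub_comm, abs_of_nonneg (by linarith)]
        rw [habs]
        have hb1 : K * (1 - s) ≤ M * (1 - s) :=
          mul_le_mul_of_nonneg_right hKM (by linarith)
        have hb2 : L₁/2 * (t - 1) ≤ M * (t - 1) :=
          mul_le_mul_of_nonneg_right hLM (by linarith)
        calc |ψ s - ψ t| ≤ |ψ s - ψ 1| + |ψ 1 - ψ t| := htri
          _ ≤ K * (1 - s) + L₁/2 * (t - 1) := add_le_add h1 h2'
          _ ≤ M * (1 - s) + M * (t - 1) := add_le_add hb1 hb2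
          _ = M * (t - s) := by ring
  intro s t hs ht
  rcases le_total s t with h | h
  · exact main s t hs h
  · rw [abs_sub_comm (ψ s), abs_sub_comm s]
    exact main t s ht h
end

section
/- Variance estimate in the light-tail case: let Y be a random variable with E|Y|^{1+ε} < ∞ for some ε ∈ (0,1], let |f(X)| ≤ M, |f*(X)| ≤ M, σ ≥ max(2M,1), and ψ satisfy the strong mean-calibration conditions. Setting ξ = σ²ψ((Y-f*(X))²/σ²) - σ²ψ((Y-f(X))²/σ²), one has E[ξ²] ≤ c₁·σ^{1-ε} where c₁ = 2^{4+2ε} L₁^{1-ε} L₃^{1+ε} M² (E|Y|^{1+ε} + M^{1+ε}). -/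
/-!
On the one hand `|ξ| ≤ L₁ σ |f - f*| ≤ 2 L₁ M σ`, because `t ↦ ψ(t²)` is `L₁`-Lipschitz and the
two arguments differ by `|f - f*| / σ`. On the other hand `|ξ| ≤ L₃ |(Y - f*)² - (Y - f)²| ≤
4 L₃ M (|Y| + M)`, because `ψ` is `L₃`-Lipschitz. Interpolating, `ξ² = |ξ|^{1-ε} |ξ|^{1+ε}` is
bounded by `c σ^{1-ε} (|Y| + M)^{1+ε}`, whose expectation is controlled by the `(1+ε)`-th moment.
-/

open MeasureTheory

lemma sq_le_rpow_one_sub_mul_rpow_one_add {a A B ε : ℝ} (hε : 0 ≤ ε) (hε1 : ε ≤ 1)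
    (ha : 0 ≤ a) (hA : a ≤ A) (hB : a ≤ B) :
    a ^ 2 ≤ A ^ (1 - ε) * B ^ (1 + ε) := by
  calc a ^ 2 = a ^ (1 - ε) * a ^ (1 + ε) := by
        rw [← Real.rpow_add_of_nonneg ha (by linarith) (by linarith)]
        norm_num
    _ ≤ A ^ (1 - ε) * B ^ (1 + ε) :=
        mul_le_mul (Real.rpow_le_rpow ha hA (by linarith)) (Real.rpow_le_rpow ha hB (by linarith))
          (by positivity) (Real.rpow_nonneg (ha.trans hA) _)

lemma Real.add_rpow_le_two_rpow_mul_rpow_add_rpow {a b p : ℝ} (ha : 0 ≤ a) (hb : 0 ≤ b)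
    (hp : 1 ≤ p) : (a + b) ^ p ≤ 2 ^ p * (a ^ p + b ^ p) := by
  lift a to NNReal using ha
  lift b to NNReal using hb
  calc ((a : ℝ) + b) ^ p ≤ 2 ^ (p - 1) * (a ^ p + b ^ p) := by
        exact_mod_cast NNReal.rpow_add_le_mul_rpow_add_rpow a b hp
    _ ≤ 2 ^ p * (a ^ p + b ^ p) := by
        gcongr
        · norm_num
        · linarith

lemma abs_sq_sub_sq_le {y a b M : ℝ} (ha : |a| ≤ M) (hb : |b| ≤ M) :
    |(y - a) ^ 2 - (y - b) ^ 2| ≤ 2 * M * (2 * (|y| + M)) := by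
  rw [show (y - a) ^ 2 - (y - b) ^ 2 = (b - a) * (2 * y - a - b) by ring, abs_mul]
  have hba : |b - a| ≤ 2 * M := by
    calc |b - a| ≤ |b| + |a| := abs_sub _ _
      _ ≤ 2 * M := by linarith
  have hyab : |2 * y - a - b| ≤ 2 * (|y| + M) := by
    calc |2 * y - a - b| ≤ |2 * y| + |a| + |b| :=
          (abs_sub _ _).trans (add_le_add_left (abs_sub _ _) _)
      _ ≤ 2 * (|y| + M) := by rw [abs_mul, abs_two]; linarith
  exact mul_le_mul hba hyab (abs_nonneg _) ((abs_nonneg _).trans hba)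

section ScaledLoss

variable {ψ : ℝ → ℝ} {σ : ℝ}

lemma abs_scaled_sub_le_of_sq_lipschitz {L₁ : ℝ} (hσ : 0 < σ)
    (hL₁ : ∀ s t : ℝ, |ψ (s ^ 2) - ψ (t ^ 2)| ≤ L₁ * |s - t|) (y a b : ℝ) :
    |σ ^ 2 * ψ ((y - a) ^ 2 / σ ^ 2) - σ ^ 2 * ψ ((y - b) ^ 2 / σ ^ 2)| ≤ L₁ * σ * |a - b| := by
  rw [← mul_sub, abs_mul, abs_of_nonneg (sq_nonneg σ), ← div_pow, ← div_pow]
  calc σ ^ 2 * |ψ (((y - a) / σ) ^ 2) - ψ (((y - b) / σ) ^ 2)|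
      ≤ σ ^ 2 * (L₁ * |(y - a) / σ - (y - b) / σ|) := by gcongr; exact hL₁ _ _
    _ = L₁ * σ * |a - b| := by
        rw [div_sub_div_same, abs_div, abs_of_pos hσ, show y - a - (y - b) = -(a - b) by ring,
          abs_neg]
        field_simp

lemma abs_scaled_sub_le_of_lipschitz {L₃ : ℝ} (hσ : σ ≠ 0)
    (hL₃ : ∀ s t : ℝ, 0 ≤ s → 0 ≤ t → |ψ s - ψ t| ≤ L₃ * |s - t|) (y a b : ℝ) :
    |σ ^ 2 * ψ ((y - a) ^ 2 / σ ^ 2) - σ ^ 2 * ψ ((y - b) ^ 2 / σ ^ 2)| ≤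
      L₃ * |(y - a) ^ 2 - (y - b) ^ 2| := by
  rw [← mul_sub, abs_mul, abs_of_nonneg (sq_nonneg σ)]
  calc σ ^ 2 * |ψ ((y - a) ^ 2 / σ ^ 2) - ψ ((y - b) ^ 2 / σ ^ 2)|
      ≤ σ ^ 2 * (L₃ * |(y - a) ^ 2 / σ ^ 2 - (y - b) ^ 2 / σ ^ 2|) := by
        gcongr; exact hL₃ _ _ (by positivity) (by positivity)
    _ = L₃ * |(y - a) ^ 2 - (y - b) ^ 2| := by
        rw [div_sub_div_same, abs_div, abs_of_nonneg (sq_nonneg σ)]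
        field_simp

lemma sq_scaled_sub_le {L₁ L₃ M ε : ℝ} (hε : 0 ≤ ε) (hε1 : ε ≤ 1) (hM : 0 ≤ M) (hσ : 0 < σ)
    (hL₁ : ∀ s t : ℝ, |ψ (s ^ 2) - ψ (t ^ 2)| ≤ L₁ * |s - t|)
    (hL₃ : ∀ s t : ℝ, 0 ≤ s → 0 ≤ t → |ψ s - ψ t| ≤ L₃ * |s - t|)
    {y a b : ℝ} (ha : |a| ≤ M) (hb : |b| ≤ M) :
    (σ ^ 2 * ψ ((y - a) ^ 2 / σ ^ 2) - σ ^ 2 * ψ ((y - b) ^ 2 / σ ^ 2)) ^ 2 ≤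
      2 ^ (4 + 2 * ε) * L₁ ^ (1 - ε) * L₃ ^ (1 + ε) * M ^ 2 * σ ^ (1 - ε) *
        (|y| ^ (1 + ε) + M ^ (1 + ε)) := by
  set ξ := σ ^ 2 * ψ ((y - a) ^ 2 / σ ^ 2) - σ ^ 2 * ψ ((y - b) ^ 2 / σ ^ 2)
  have hL₁0 : 0 ≤ L₁ := by simpa using (abs_nonneg _).trans (hL₁ 1 0)
  have hL₃0 : 0 ≤ L₃ := by simpa using (abs_nonneg _).trans (hL₃ 1 0 zero_le_one le_rfl)
  have hab : |a - b| ≤ 2 * M := (abs_sub _ _).trans (by linarith)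
  have h₁ : |ξ| ≤ 2 * M * (L₁ * σ) :=
    calc |ξ| ≤ L₁ * σ * |a - b| := abs_scaled_sub_le_of_sq_lipschitz hσ hL₁ y a b
      _ ≤ L₁ * σ * (2 * M) := by gcongr
      _ = 2 * M * (L₁ * σ) := by ring
  have h₂ : |ξ| ≤ 2 * M * (2 * L₃ * (|y| + M)) :=
    calc |ξ| ≤ L₃ * |(y - a) ^ 2 - (y - b) ^ 2| := abs_scaled_sub_le_of_lipschitz hσ.ne' hL₃ y a b
      _ ≤ L₃ * (2 * M * (2 * (|y| + M))) := by gcongr; exact abs_sq_sub_sq_le ha hb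
      _ = 2 * M * (2 * L₃ * (|y| + M)) := by ring
  have hsplit : (2 : ℝ) ^ (4 + 2 * ε) = 2 ^ 2 * 2 ^ (1 + ε) * 2 ^ (1 + ε) := by
    rw [← Real.rpow_natCast, ← Real.rpow_add two_pos, ← Real.rpow_add two_pos]
    norm_num
    ring_nf
  have hM2 : (2 * M) ^ (1 - ε) * (2 * M) ^ (1 + ε) = 2 ^ 2 * M ^ 2 := by
    rw [← Real.rpow_add_of_nonneg (by positivity) (by linarith) (by linarith)]
    norm_num
    ring
  calc ξ ^ 2 = |ξ| ^ 2 := (sq_abs ξ).symm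
    _ ≤ (2 * M * (L₁ * σ)) ^ (1 - ε) * (2 * M * (2 * L₃ * (|y| + M))) ^ (1 + ε) :=
        sq_le_rpow_one_sub_mul_rpow_one_add hε hε1 (abs_nonneg ξ) h₁ h₂
    _ = 2 ^ 2 * 2 ^ (1 + ε) * L₁ ^ (1 - ε) * L₃ ^ (1 + ε) * M ^ 2 * σ ^ (1 - ε) *
          (|y| + M) ^ (1 + ε) := by
        have h2M : (0 : ℝ) ≤ 2 * M := by positivity
        have hyM : 0 ≤ |y| + M := by positivity
        rw [Real.mul_rpow h2M (by positivity), Real.mul_rpow hL₁0 hσ.le,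
          Real.mul_rpow h2M (by positivity), Real.mul_rpow (by positivity) hyM,
          Real.mul_rpow zero_le_two hL₃0]
        linear_combination (L₁ ^ (1 - ε) * σ ^ (1 - ε) * 2 ^ (1 + ε) * L₃ ^ (1 + ε) *
          (|y| + M) ^ (1 + ε)) * hM2
    _ ≤ 2 ^ 2 * 2 ^ (1 + ε) * L₁ ^ (1 - ε) * L₃ ^ (1 + ε) * M ^ 2 * σ ^ (1 - ε) *
          (2 ^ (1 + ε) * (|y| ^ (1 + ε) + M ^ (1 + ε))) := by
        gcongr
        exact Real.add_rpow_le_two_rpow_mul_rpow_add_rpow (abs_nonneg y) hM (by linarith)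
    _ = 2 ^ (4 + 2 * ε) * L₁ ^ (1 - ε) * L₃ ^ (1 + ε) * M ^ 2 * σ ^ (1 - ε) *
          (|y| ^ (1 + ε) + M ^ (1 + ε)) := by
        rw [hsplit]; ring

end ScaledLoss

lemma integral_le_mul_integral_add_of_ae_le {Ω : Type*} [MeasurableSpace Ω] {μ : Measure Ω}
    [IsProbabilityMeasure μ] {g h : Ω → ℝ} {K C : ℝ} (hg : 0 ≤ᵐ[μ] g) (hh : Integrable h μ)
    (hgh : ∀ᵐ ω ∂μ, g ω ≤ K * (h ω + C)) :
    ∫ ω, g ω ∂μ ≤ K * ((∫ ω, h ω ∂μ) + C) :=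
  calc ∫ ω, g ω ∂μ ≤ ∫ ω, K * (h ω + C) ∂μ :=
        integral_mono_of_nonneg hg ((hh.add (integrable_const C)).const_mul K) hgh
    _ = K * ((∫ ω, h ω ∂μ) + C) := by
        rw [integral_const_mul, integral_add hh (integrable_const C), integral_const,
          probReal_univ, one_smul]

theorem stmt10_general {Ω 𝒳 : Type*} [MeasurableSpace Ω]
    (μ : Measure Ω) [IsProbabilityMeasure μ]
    (X : Ω → 𝒳) (Y : Ω → ℝ)
    (f fstar : 𝒳 → ℝ)
    (ψ : ℝ → ℝ)
    (ε M L₁ L₃ σ : ℝ) (hε : 0 < ε) (hε1 : ε ≤ 1) (hM : 0 < M)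
    (hσ : max (2 * M) 1 ≤ σ)
    (hfM : ∀ x, |f x| ≤ M) (hfstarM : ∀ x, |fstar x| ≤ M)
    (hL₁ : ∀ s t : ℝ, |ψ (s ^ 2) - ψ (t ^ 2)| ≤ L₁ * |s - t|)
    (hL₃ : ∀ s t : ℝ, 0 ≤ s → 0 ≤ t → |ψ s - ψ t| ≤ L₃ * |s - t|)
    (hmom : Integrable (fun ω => |Y ω| ^ (1 + ε)) μ) :
    ∫ ω, (σ ^ 2 * ψ ((Y ω - fstar (X ω)) ^ 2 / σ ^ 2) -
          σ ^ 2 * ψ ((Y ω - f (X ω)) ^ 2 / σ ^ 2)) ^ 2 ∂μ ≤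
      2 ^ (4 + 2 * ε) * L₁ ^ (1 - ε) * L₃ ^ (1 + ε) * M ^ 2 *
          ((∫ ω, |Y ω| ^ (1 + ε) ∂μ) + M ^ (1 + ε)) *
        σ ^ (1 - ε) := by
  have hσ0 : 0 < σ := one_pos.trans_le ((le_max_right _ _).trans hσ)
  calc _ ≤ 2 ^ (4 + 2 * ε) * L₁ ^ (1 - ε) * L₃ ^ (1 + ε) * M ^ 2 * σ ^ (1 - ε) *
          ((∫ ω, |Y ω| ^ (1 + ε) ∂μ) + M ^ (1 + ε)) :=
        integral_le_mul_integral_add_of_ae_le (ae_of_all _ fun _ => sq_nonneg _) hmom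
          (ae_of_all _ fun ω => sq_scaled_sub_le hε.le hε1 hM.le hσ0 hL₁ hL₃ (hfstarM _) (hfM _))
    _ = _ := by ring

/-- Variance estimate, light-tail case `0 < ε ≤ 1`:
`E[ξ²] ≤ c₁ σ^{1-ε}` with
`c₁ = 2^{4+2ε} L₁^{1-ε} L₃^{1+ε} M² (E|Y|^{1+ε} + M^{1+ε})`, where
`ξ = σ²ψ((Y-f*(X))²/σ²) - σ²ψ((Y-f(X))²/σ²)`. -/
theorem stmt10 {Ω 𝒳 : Type*} [MeasurableSpace Ω] [MeasurableSpace 𝒳]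
    (μ : Measure Ω) [IsProbabilityMeasure μ]
    (X : Ω → 𝒳) (Y : Ω → ℝ) (hX : Measurable X) (hY : Measurable Y)
    (f fstar : 𝒳 → ℝ) (hf : Measurable f) (hfstar : Measurable fstar)
    (ψ : ℝ → ℝ) (hψmeas : Measurable ψ)
    (ε M L₁ L₃ σ : ℝ) (hε : 0 < ε) (hε1 : ε ≤ 1) (hM : 0 < M)
    (hσ : max (2 * M) 1 ≤ σ)
    (hfM : ∀ x, |f x| ≤ M) (hfstarM : ∀ x, |fstar x| ≤ M)
    (hL₁ : ∀ s t : ℝ, |ψ (s ^ 2) - ψ (t ^ 2)| ≤ L₁ * |s - t|)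
    (hL₃ : ∀ s t : ℝ, 0 ≤ s → 0 ≤ t → |ψ s - ψ t| ≤ L₃ * |s - t|)
    (hmom : Integrable (fun ω => |Y ω| ^ (1 + ε)) μ) :
    ∫ ω, (σ ^ 2 * ψ ((Y ω - fstar (X ω)) ^ 2 / σ ^ 2) -
          σ ^ 2 * ψ ((Y ω - f (X ω)) ^ 2 / σ ^ 2)) ^ 2 ∂μ ≤
      2 ^ (4 + 2 * ε) * L₁ ^ (1 - ε) * L₃ ^ (1 + ε) * M ^ 2 *
          ((∫ ω, |Y ω| ^ (1 + ε) ∂μ) + M ^ (1 + ε)) *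
        σ ^ (1 - ε) :=
  stmt10_general μ X Y f fstar ψ ε M L₁ L₃ σ hε hε1 hM hσ hfM hfstarM hL₁ hL₃ hmom
end

section
/- Asymptotic mean calibration: let f* = E(Y|X) with ‖f*‖_∞ ≤ M, E|Y|^{1+ε} < ∞, σ ≥ max(2M,1), and p_σ(t) = ψ(t²/σ²) strongly mean-calibrated with c₀ = -ψ'(0). Then for any measurable f with ‖f‖_∞ ≤ M, |σ²[𝒢_σ(f*) - 𝒢_σ(f)] - c₀‖f - f*‖²_{2,ρ}| ≤ c_ε·σ^{-θ_ε}, where θ_ε = min(ε,2), ‖f-f*‖²_{2,ρ} = E(f(X)-f*(X))², 𝒢_σ(g) = E p_σ(Y - g(X)), and c_ε = 6M(L₃+c₀)E|2Y|^{1+ε} + 16ML₂(E|Y|^{min(1+ε,3)} + M³). -/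
/-!
Write `a = Y - f*(X)` and `b = Y - f(X)`. When `|Y| < σ/2`, both `a²/σ²` and `b²/σ²` lie in
`[0, 1)`, where `ψ'` is `L₂`-Lipschitz, so a first-order expansion of `ψ` at `0` gives
`σ²(ψ(a²/σ²) - ψ(b²/σ²)) = c₀(b² - a²) + O(L₂ |a⁴ - b⁴| / σ²)`, which is `O(σ^{-θ})`.
When `|Y| ≥ σ/2`, the Lipschitz bound on `t ↦ ψ(t²)` makes the same error `O(σ |Y|)`, and on
this event `σ |Y| ≤ |2Y|^{1+ε} σ^{-θ}`. Integrating, `E[b² - a²] = ‖f - f*‖²` because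
`f(X) - f*(X)` is bounded and `X`-measurable while `Y - f*(X)` has zero conditional mean.
-/

open MeasureTheory Set

section Taylor

variable {ψ ψ' : ℝ → ℝ} {a L : ℝ}

lemma monotoneOn_sub_mul_add_sq
    (hderiv : ∀ t ∈ Ico 0 a, HasDerivWithinAt ψ (ψ' t) (Ico 0 a) t)
    (hlip : ∀ t ∈ Ico 0 a, |ψ' t - ψ' 0| ≤ L * t) :
    MonotoneOn (fun t => ψ t - ψ' 0 * t + L / 2 * t ^ 2) (Ico 0 a) := by
  have hsub : interior (Ico (0 : ℝ) a) ⊆ Ico 0 a := interior_subset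
  have hcont : ContinuousOn ψ (Ico 0 a) := fun t ht => (hderiv t ht).continuousWithinAt
  refine monotoneOn_of_hasDerivWithinAt_nonneg (convex_Ico 0 a)
    (f' := fun t => ψ' t - ψ' 0 + L * t) (by fun_prop) (fun t ht => ?_) (fun t ht => ?_)
  · have h := (((hderiv t (hsub ht)).mono hsub).sub
      ((hasDerivAt_id' t).const_mul (ψ' 0)).hasDerivWithinAt).add
      ((hasDerivAt_pow 2 t).const_mul (L / 2)).hasDerivWithinAt
    exact h.congr_deriv (by
      simp only [mul_one, Nat.cast_ofNat, Nat.add_one_sub_one, pow_one]; ring)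
  · linarith [(abs_le.1 (hlip t (hsub ht))).1]

lemma abs_sub_sub_deriv_zero_mul_le
    (hderiv : ∀ t ∈ Ico 0 a, HasDerivWithinAt ψ (ψ' t) (Ico 0 a) t)
    (hL : ∀ s ∈ Ico 0 a, ∀ t ∈ Ico 0 a, |ψ' s - ψ' t| ≤ L * |s - t|)
    {u v : ℝ} (hu : u ∈ Ico 0 a) (hv : v ∈ Ico 0 a) :
    |ψ u - ψ v - ψ' 0 * (u - v)| ≤ L / 2 * |u ^ 2 - v ^ 2| := by
  wlog hvu : v ≤ u generalizing u v
  · rw [abs_sub_comm (u ^ 2), show ψ u - ψ v - ψ' 0 * (u - v) = -(ψ v - ψ u - ψ' 0 * (v - u))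
      by ring, abs_neg]
    exact this hv hu (le_of_not_ge hvu)
  have h0 : (0 : ℝ) ∈ Ico 0 a := ⟨le_rfl, hu.1.trans_lt hu.2⟩
  have hlip : ∀ t ∈ Ico 0 a, |ψ' t - ψ' 0| ≤ L * t := fun t ht => by
    simpa [abs_of_nonneg ht.1] using hL t ht 0 h0
  have hup := monotoneOn_sub_mul_add_sq hderiv hlip hv hu hvu
  have hlow := monotoneOn_sub_mul_add_sq (ψ := fun t => -ψ t) (ψ' := fun t => -ψ' t)
    (fun t ht => (hderiv t ht).neg)
    (fun t ht => by rw [neg_sub_neg, abs_sub_comm]; exact hlip t ht) hv hu hvu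
  simp only at hup hlow
  rw [abs_of_nonneg (by nlinarith [hu.1, hv.1] : 0 ≤ u ^ 2 - v ^ 2), abs_le]
  constructor <;> linarith

end Taylor

noncomputable def gain (ψ : ℝ → ℝ) (σ t : ℝ) : ℝ := ψ (t ^ 2 / σ ^ 2)

section Pointwise

variable {ψ : ℝ → ℝ} {d L₁ L₂ M σ ε y A F : ℝ}

lemma abs_gain_sub_gain_le (hL₁ : ∀ s t : ℝ, |ψ (s ^ 2) - ψ (t ^ 2)| ≤ L₁ * |s - t|) (a b : ℝ) :
    |gain ψ σ a - gain ψ σ b| ≤ L₁ * |a - b| / |σ| := by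
  unfold gain
  rw [← div_pow, ← div_pow]
  calc _ ≤ L₁ * |a / σ - b / σ| := hL₁ _ _
    _ = _ := by rw [← sub_div, abs_div, mul_div_assoc]

lemma abs_sub_sq_sub_sub_sq_le (hA : |A| ≤ M) (hF : |F| ≤ M) :
    |(y - A) ^ 2 - (y - F) ^ 2| ≤ 4 * M * (|y| + M) := by
  have hFA : |F - A| ≤ 2 * M := (abs_sub _ _).trans (by linarith)
  have hsum : |2 * y - A - F| ≤ 2 * (|y| + M) := by
    have h1 := abs_sub (2 * y - A) F
    have h2 := abs_sub (2 * y) A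
    rw [abs_mul, abs_two] at h2
    linarith
  rw [show (y - A) ^ 2 - (y - F) ^ 2 = (F - A) * (2 * y - A - F) by ring, abs_mul]
  nlinarith [abs_nonneg (F - A), abs_nonneg (2 * y - A - F)]

lemma abs_sub_pow_four_sub_sub_pow_four_le (hA : |A| ≤ M) (hF : |F| ≤ M) :
    |(y - A) ^ 4 - (y - F) ^ 4| ≤ 8 * M * (|y| + M) ^ 3 := by
  have hsq : ∀ B, |B| ≤ M → (y - B) ^ 2 ≤ (|y| + M) ^ 2 := fun B hB => by
    rw [← sq_abs]
    exact pow_le_pow_left₀ (abs_nonneg _) ((abs_sub _ _).trans (by linarith)) 2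
  rw [show (y - A) ^ 4 - (y - F) ^ 4 = ((y - A) ^ 2 - (y - F) ^ 2) * ((y - A) ^ 2 + (y - F) ^ 2)
    by ring, abs_mul, abs_of_nonneg (by positivity : 0 ≤ (y - A) ^ 2 + (y - F) ^ 2)]
  have hM : 0 ≤ M := (abs_nonneg A).trans hA
  calc _ ≤ 4 * M * (|y| + M) * (2 * (|y| + M) ^ 2) :=
        mul_le_mul (abs_sub_sq_sub_sub_sq_le hA hF) (by linarith [hsq A hA, hsq F hF])
          (by positivity) (by positivity)
    _ = 8 * M * (|y| + M) ^ 3 := by ring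

lemma abs_sq_mul_gain_sub_sub_le_of_abs_lt
    (htaylor : ∀ u ∈ Ico (0 : ℝ) 1, ∀ v ∈ Ico (0 : ℝ) 1,
      |ψ u - ψ v - d * (u - v)| ≤ L₂ / 2 * |u ^ 2 - v ^ 2|)
    (hσ : 0 < σ) {a b : ℝ} (ha : |a| < σ) (hb : |b| < σ) :
    |σ ^ 2 * (gain ψ σ a - gain ψ σ b) - -d * (b ^ 2 - a ^ 2)| ≤
      L₂ / 2 * |a ^ 4 - b ^ 4| / σ ^ 2 := by
  unfold gain
  have hmem : ∀ c : ℝ, |c| < σ → c ^ 2 / σ ^ 2 ∈ Ico (0 : ℝ) 1 := fun c hc =>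
    ⟨by positivity, (div_lt_one (by positivity)).2 (sq_lt_sq.2 (by rwa [abs_of_pos hσ]))⟩
  have hscale : σ ^ 2 * (d * (a ^ 2 / σ ^ 2 - b ^ 2 / σ ^ 2)) = d * (a ^ 2 - b ^ 2) := by
    field_simp
  calc _ = |σ ^ 2 * (ψ (a ^ 2 / σ ^ 2) - ψ (b ^ 2 / σ ^ 2) -
        d * (a ^ 2 / σ ^ 2 - b ^ 2 / σ ^ 2))| := by congr 1; linear_combination hscale
    _ = σ ^ 2 * |ψ (a ^ 2 / σ ^ 2) - ψ (b ^ 2 / σ ^ 2) -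
        d * (a ^ 2 / σ ^ 2 - b ^ 2 / σ ^ 2)| := by
        rw [abs_mul, abs_of_pos (by positivity)]
    _ ≤ σ ^ 2 * (L₂ / 2 * |(a ^ 2 / σ ^ 2) ^ 2 - (b ^ 2 / σ ^ 2) ^ 2|) := by
        gcongr
        exact htaylor _ (hmem a ha) _ (hmem b hb)
    _ = L₂ / 2 * |a ^ 4 - b ^ 4| / σ ^ 2 := by
        rw [show (a ^ 2 / σ ^ 2) ^ 2 - (b ^ 2 / σ ^ 2) ^ 2 = (a ^ 4 - b ^ 4) / (σ ^ 2) ^ 2 by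
          ring, abs_div, abs_of_pos (by positivity : 0 < (σ ^ 2) ^ 2)]
        field_simp

lemma add_pow_three_le_rpow {q : ℝ} (hy : 0 ≤ y) (hM : 0 ≤ M) (hyσ : y ≤ σ) (hσ : 1 ≤ σ)
    (hq : q ≤ 3) :
    (y + M) ^ 3 ≤ 4 * (y ^ q + M ^ 3) * σ ^ (3 - q) := by
  have hy3 : y ^ 3 ≤ y ^ q * σ ^ (3 - q) :=
    calc y ^ 3 = y ^ q * y ^ (3 - q) := by
          rw [← Real.rpow_add' hy (by norm_num), add_sub_cancel, Real.rpow_ofNat]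
      _ ≤ y ^ q * σ ^ (3 - q) := by gcongr
  have hM3 : M ^ 3 ≤ M ^ 3 * σ ^ (3 - q) :=
    le_mul_of_one_le_right (by positivity) (Real.one_le_rpow hσ (by linarith))
  have hbin : (y + M) ^ 3 ≤ 4 * (y ^ 3 + M ^ 3) := by
    nlinarith [mul_nonneg (sq_nonneg (y - M)) hy, mul_nonneg (sq_nonneg (y - M)) hM]
  linear_combination hbin + 4 * hy3 + 4 * hM3

lemma one_sub_min_one_add_three (ε : ℝ) : 1 - min (1 + ε) 3 = -min ε 2 := by
  rw [show (3 : ℝ) = 1 + 2 by norm_num, min_add_add_left]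
  ring

lemma abs_sq_mul_gain_sub_sub_le_of_abs_lt_half
    (htaylor : ∀ u ∈ Ico (0 : ℝ) 1, ∀ v ∈ Ico (0 : ℝ) 1,
      |ψ u - ψ v - d * (u - v)| ≤ L₂ / 2 * |u ^ 2 - v ^ 2|)
    (hL₂ : 0 ≤ L₂) (hσ : 1 ≤ σ) (hMσ : 2 * M ≤ σ) (hA : |A| ≤ M) (hF : |F| ≤ M)
    (hy : |y| < σ / 2) :
    |σ ^ 2 * (gain ψ σ (y - A) - gain ψ σ (y - F)) - -d * ((y - F) ^ 2 - (y - A) ^ 2)| ≤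
      16 * M * L₂ * (|y| ^ min (1 + ε) 3 + M ^ 3) * σ ^ (-min ε 2) := by
  have hM : 0 ≤ M := (abs_nonneg A).trans hA
  have hσ0 : 0 < σ := by linarith
  have hres : ∀ B, |B| ≤ M → |y - B| < σ := fun B hB => (abs_sub _ _).trans_lt (by linarith)
  have hsplit : σ ^ (3 - min (1 + ε) 3) = σ ^ 2 * σ ^ (-min ε 2) := by
    rw [← one_sub_min_one_add_three, ← Real.rpow_two, ← Real.rpow_add hσ0]
    ring_nf
  calc _ ≤ L₂ / 2 * |(y - A) ^ 4 - (y - F) ^ 4| / σ ^ 2 :=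
        abs_sq_mul_gain_sub_sub_le_of_abs_lt htaylor hσ0 (hres A hA) (hres F hF)
    _ ≤ L₂ / 2 * (8 * M * (|y| + M) ^ 3) / σ ^ 2 := by
        gcongr
        exact abs_sub_pow_four_sub_sub_pow_four_le hA hF
    _ ≤ L₂ / 2 * (8 * M * (4 * (|y| ^ min (1 + ε) 3 + M ^ 3) * σ ^ (3 - min (1 + ε) 3))) /
          σ ^ 2 := by
        gcongr
        exact add_pow_three_le_rpow (abs_nonneg y) hM (by linarith) hσ (min_le_right _ _)
    _ = _ := by
        rw [hsplit]
        field_simp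
        ring

lemma le_rpow_one_add_mul_rpow_neg {z θ : ℝ} (hσ : 1 ≤ σ) (hσz : σ ≤ z) (hε : 0 ≤ ε)
    (hθε : θ ≤ ε) :
    z ≤ z ^ (1 + ε) * σ ^ (-θ) := by
  have hz : 0 < z := by linarith
  calc z = z ^ (1 + ε) * z ^ (-ε) := by rw [← Real.rpow_add hz]; simp
    _ ≤ z ^ (1 + ε) * σ ^ (-ε) := mul_le_mul_of_nonneg_left
        (Real.rpow_le_rpow_of_nonpos (by linarith) hσz (by linarith)) (by positivity)
    _ ≤ z ^ (1 + ε) * σ ^ (-θ) := by gcongr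

lemma abs_sq_mul_gain_sub_sub_le_of_half_le_abs
    (hL₁ : ∀ s t : ℝ, |ψ (s ^ 2) - ψ (t ^ 2)| ≤ L₁ * |s - t|) (hd : d ≤ 0) (hε : 0 ≤ ε)
    (hσ : 1 ≤ σ) (hMσ : 2 * M ≤ σ) (hA : |A| ≤ M) (hF : |F| ≤ M) (hy : σ / 2 ≤ |y|) :
    |σ ^ 2 * (gain ψ σ (y - A) - gain ψ σ (y - F)) - -d * ((y - F) ^ 2 - (y - A) ^ 2)| ≤
      6 * M * (max (L₂ + -d) (L₁ / 2) + -d) * |2 * y| ^ (1 + ε) * σ ^ (-min ε 2) := by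
  have hM : 0 ≤ M := (abs_nonneg A).trans hA
  have hσ0 : 0 < σ := by linarith
  have hL₁0 : 0 ≤ L₁ := nonneg_of_mul_nonneg_left ((abs_nonneg _).trans (hL₁ 1 0)) (by norm_num)
  have h2y : |2 * y| = 2 * |y| := by rw [abs_mul, abs_two]
  have hgain : σ ^ 2 * |gain ψ σ (y - A) - gain ψ σ (y - F)| ≤ 2 * M * L₁ * |2 * y| :=
    calc _ ≤ σ ^ 2 * (L₁ * |F - A| / σ) := by
          gcongr
          simpa [abs_of_pos hσ0] using abs_gain_sub_gain_le hL₁ (σ := σ) (y - A) (y - F)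
      _ = σ * L₁ * |F - A| := by field_simp
      _ ≤ 2 * |y| * L₁ * (2 * M) := by
          gcongr
          · linarith
          · exact (abs_sub _ _).trans (by linarith)
      _ = 2 * M * L₁ * |2 * y| := by rw [h2y]; ring
  have hsq : |(y - F) ^ 2 - (y - A) ^ 2| ≤ 4 * M * |2 * y| :=
    (abs_sub_sq_sub_sub_sq_le hF hA).trans (by rw [h2y]; nlinarith)
  calc _ ≤ σ ^ 2 * |gain ψ σ (y - A) - gain ψ σ (y - F)| + -d * |(y - F) ^ 2 - (y - A) ^ 2| := by
        refine (abs_sub _ _).trans_eq ?_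
        rw [abs_mul, abs_mul, abs_of_pos (by positivity), abs_of_nonneg (by linarith : 0 ≤ -d)]
    _ ≤ (2 * M * L₁ + 4 * M * -d) * |2 * y| := by
        nlinarith [mul_le_mul_of_nonneg_left hsq (by linarith : 0 ≤ -d)]
    _ ≤ 6 * M * (max (L₂ + -d) (L₁ / 2) + -d) * |2 * y| := by
        gcongr
        nlinarith [mul_le_mul_of_nonneg_left (le_max_right (L₂ + -d) (L₁ / 2)) hM]
    _ ≤ 6 * M * (max (L₂ + -d) (L₁ / 2) + -d) * (|2 * y| ^ (1 + ε) * σ ^ (-min ε 2)) := by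
        have hK : 0 ≤ max (L₂ + -d) (L₁ / 2) + -d := by linarith [le_max_right (L₂ + -d) (L₁ / 2)]
        exact mul_le_mul_of_nonneg_left
          (le_rpow_one_add_mul_rpow_neg hσ (by linarith) hε (min_le_left ε 2))
          (mul_nonneg (by linarith) hK)
    _ = _ := by ring

lemma abs_sq_mul_gain_sub_sub_le
    (htaylor : ∀ u ∈ Ico (0 : ℝ) 1, ∀ v ∈ Ico (0 : ℝ) 1,
      |ψ u - ψ v - d * (u - v)| ≤ L₂ / 2 * |u ^ 2 - v ^ 2|)
    (hL₁ : ∀ s t : ℝ, |ψ (s ^ 2) - ψ (t ^ 2)| ≤ L₁ * |s - t|) (hd : d ≤ 0) (hL₂ : 0 ≤ L₂)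
    (hε : 0 ≤ ε) (hσ : max (2 * M) 1 ≤ σ) (hA : |A| ≤ M) (hF : |F| ≤ M) :
    |σ ^ 2 * (gain ψ σ (y - A) - gain ψ σ (y - F)) - -d * ((y - F) ^ 2 - (y - A) ^ 2)| ≤
      6 * M * (max (L₂ + -d) (L₁ / 2) + -d) * |2 * y| ^ (1 + ε) * σ ^ (-min ε 2) +
        16 * M * L₂ * (|y| ^ min (1 + ε) 3 + M ^ 3) * σ ^ (-min ε 2) := by
  have hM : 0 ≤ M := (abs_nonneg A).trans hA
  have hσ1 : 1 ≤ σ := (le_max_right _ _).trans hσ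
  have hMσ : 2 * M ≤ σ := (le_max_left _ _).trans hσ
  rcases lt_or_ge |y| (σ / 2) with hy | hy
  · have hK : 0 ≤ max (L₂ + -d) (L₁ / 2) + -d := by linarith [le_max_left (L₂ + -d) (L₁ / 2)]
    have : 0 ≤ |2 * y| ^ (1 + ε) * σ ^ (-min ε 2) := by positivity
    refine le_add_of_nonneg_of_le ?_
      (abs_sq_mul_gain_sub_sub_le_of_abs_lt_half htaylor hL₂ hσ1 hMσ hA hF hy)
    rw [mul_assoc]
    exact mul_nonneg (mul_nonneg (by positivity) hK) this
  · exact le_add_of_le_of_nonneg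
      (abs_sq_mul_gain_sub_sub_le_of_half_le_abs hL₁ hd hε hσ1 hMσ hA hF hy) (by positivity)

end Pointwise

section Integral

variable {Ω : Type*} {m m₀ : MeasurableSpace Ω} {μ : Measure[m₀] Ω} [IsFiniteMeasure μ]

lemma integrable_abs_rpow_of_le {Y : Ω → ℝ} {p q : ℝ} (hY : AEStronglyMeasurable Y μ)
    (hp : Integrable (fun ω => |Y ω| ^ p) μ) (hq : 0 ≤ q) (hqp : q ≤ p) :
    Integrable (fun ω => |Y ω| ^ q) μ := by
  refine ((integrable_const 1).add hp).mono'
    ((Real.continuous_rpow_const hq).comp_aestronglyMeasurable hY.norm) (ae_of_all _ fun ω => ?_)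
  rw [Real.norm_eq_abs, abs_of_nonneg (by positivity), Pi.add_apply]
  rcases le_total |Y ω| 1 with h | h
  · linarith [Real.rpow_le_one (abs_nonneg _) h hq, Real.rpow_nonneg (abs_nonneg (Y ω)) p]
  · linarith [Real.rpow_le_rpow_of_exponent_le h hqp]

lemma integrable_gain_comp {ψ : ℝ → ℝ} {L₁ : ℝ}
    (hL₁ : ∀ s t : ℝ, |ψ (s ^ 2) - ψ (t ^ 2)| ≤ L₁ * |s - t|) (σ : ℝ) {u : Ω → ℝ}
    (hu : Integrable u μ) :
    Integrable (fun ω => gain ψ σ (u ω)) μ := by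
  have hlip : LipschitzWith (L₁ / |σ|).toNNReal (gain ψ σ) :=
    LipschitzWith.of_dist_le' fun s t => by
      simpa only [Real.dist_eq, mul_div_right_comm] using abs_gain_sub_gain_le hL₁ s t
  refine ((integrable_const |gain ψ σ 0|).add ((hu.abs.const_mul L₁).div_const |σ|)).mono'
    (hlip.continuous.comp_aestronglyMeasurable hu.aestronglyMeasurable) (ae_of_all _ fun ω => ?_)
  have h := abs_gain_sub_gain_le hL₁ (σ := σ) (u ω) 0
  rw [sub_zero] at h
  rw [Real.norm_eq_abs, Pi.add_apply]
  linarith [abs_sub_abs_le_abs_sub (gain ψ σ (u ω)) (gain ψ σ 0)]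

lemma integral_sub_sq_sub_sub_sq_eq_of_condExp (hm : m ≤ m₀) {Y g h : Ω → ℝ} {C : ℝ}
    (hY : Integrable Y μ) (hg : StronglyMeasurable[m] g) (hh : StronglyMeasurable[m] h)
    (hgY : g =ᵐ[μ] μ[Y | m]) (hC : ∀ ω, |h ω - g ω| ≤ C) :
    Integrable (fun ω => (Y ω - h ω) ^ 2 - (Y ω - g ω) ^ 2) μ ∧
      ∫ ω, ((Y ω - h ω) ^ 2 - (Y ω - g ω) ^ 2) ∂μ = ∫ ω, (h ω - g ω) ^ 2 ∂μ := by
  have hD : StronglyMeasurable[m] fun ω => h ω - g ω := hh.sub hg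
  have hDm : AEStronglyMeasurable (fun ω => h ω - g ω) μ := (hD.mono hm).aestronglyMeasurable
  have hDC : ∀ᵐ ω ∂μ, ‖h ω - g ω‖ ≤ C := ae_of_all _ hC
  have hgi : Integrable g μ := integrable_condExp.congr hgY.symm
  have hD2 : Integrable (fun ω => (h ω - g ω) ^ 2) μ := by
    simpa only [sq] using (Integrable.of_bound hDm C hDC).bdd_mul hDm hDC
  have hDres : Integrable (fun ω => (h ω - g ω) * (Y ω - g ω)) μ := (hY.sub hgi).bdd_mul hDm hDC
  have hres : μ[Y - g | m] =ᵐ[μ] 0 := by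
    filter_upwards [condExp_sub hY hgi m, hgY] with ω hsub hω
    rw [hsub, Pi.sub_apply, condExp_of_stronglyMeasurable hm hg hgi, ← hω, sub_self, Pi.zero_apply]
  have horth : ∫ ω, (h ω - g ω) * (Y ω - g ω) ∂μ = 0 := by
    rw [← integral_condExp hm, ← integral_zero Ω ℝ]
    refine integral_congr_ae ?_
    filter_upwards [condExp_stronglyMeasurable_mul_of_bound hm hD (hY.sub hgi) C hDC, hres]
      with ω hpull hω
    refine hpull.trans ?_
    rw [Pi.mul_apply, hω, Pi.zero_apply, mul_zero]
  have hexpand : (fun ω => (Y ω - h ω) ^ 2 - (Y ω - g ω) ^ 2) =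
      fun ω => (h ω - g ω) ^ 2 - 2 * ((h ω - g ω) * (Y ω - g ω)) := by
    funext ω; ring
  rw [hexpand]
  refine ⟨hD2.sub (hDres.const_mul 2), ?_⟩
  rw [integral_sub hD2 (hDres.const_mul 2), integral_const_mul, horth, mul_zero, sub_zero]

end Integral

lemma integral_moment_bound {Ω : Type*} [MeasurableSpace Ω] {μ : Measure Ω}
    [IsProbabilityMeasure μ] {Y : Ω → ℝ} {ε : ℝ} (hY : AEStronglyMeasurable Y μ)
    (hmom : Integrable (fun ω => |Y ω| ^ (1 + ε)) μ) (hε : 0 ≤ ε) (a b c M : ℝ) :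
    Integrable (fun ω => a * |2 * Y ω| ^ (1 + ε) * c +
        b * (|Y ω| ^ min (1 + ε) 3 + M ^ 3) * c) μ ∧
      ∫ ω, (a * |2 * Y ω| ^ (1 + ε) * c + b * (|Y ω| ^ min (1 + ε) 3 + M ^ 3) * c) ∂μ =
        (a * ∫ ω, |2 * Y ω| ^ (1 + ε) ∂μ + b * ((∫ ω, |Y ω| ^ min (1 + ε) 3 ∂μ) + M ^ 3)) * c := by
  have h2Y : Integrable (fun ω => |2 * Y ω| ^ (1 + ε)) μ :=
    (hmom.const_mul (2 ^ (1 + ε))).congr (ae_of_all _ fun ω => by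
      dsimp only
      rw [abs_mul, abs_two, Real.mul_rpow zero_le_two (abs_nonneg _)])
  have hYq : Integrable (fun ω => |Y ω| ^ min (1 + ε) 3) μ :=
    integrable_abs_rpow_of_le hY hmom (by positivity) (min_le_left _ _)
  have h₁ := (h2Y.const_mul a).mul_const c
  have h₂ : Integrable (fun ω => b * (|Y ω| ^ min (1 + ε) 3 + M ^ 3) * c) μ :=
    ((hYq.add (integrable_const _)).const_mul b).mul_const c
  refine ⟨h₁.add h₂, ?_⟩
  rw [integral_add h₁ h₂, integral_mul_const, integral_const_mul, integral_mul_const,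
    integral_const_mul, integral_add hYq (integrable_const _), integral_const, probReal_univ,
    one_smul]
  ring

theorem stmt13_general {Ω 𝒳 : Type*} [MeasurableSpace Ω] [MeasurableSpace 𝒳]
    (μ : Measure Ω) [IsProbabilityMeasure μ]
    (X : Ω → 𝒳) (Y : Ω → ℝ) (hX : Measurable X) (hY : Measurable Y)
    (fstar : 𝒳 → ℝ) (hfstar : Measurable fstar)
    (hcond : (fun ω => fstar (X ω)) =ᵐ[μ] μ[Y | MeasurableSpace.comap X inferInstance])
    (ψ ψ' : ℝ → ℝ)
    (ε M L₁ L₂ σ : ℝ) (hε : 0 < ε) (hσ : max (2 * M) 1 ≤ σ)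
    (hfstarM : ∀ x, |fstar x| ≤ M)
    (hL₁ : ∀ s t : ℝ, |ψ (s ^ 2) - ψ (t ^ 2)| ≤ L₁ * |s - t|)
    (hderiv : ∀ t ∈ Set.Ico (0 : ℝ) 1,
      HasDerivWithinAt ψ (ψ' t) (Set.Ico (0 : ℝ) 1) t)
    (hψ'0 : ψ' 0 < 0)
    (hL₂ : ∀ s ∈ Set.Ico (0 : ℝ) 1, ∀ t ∈ Set.Ico (0 : ℝ) 1,
      |ψ' s - ψ' t| ≤ L₂ * |s - t|)
    (hmom : Integrable (fun ω => |Y ω| ^ (1 + ε)) μ) :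
    ∀ f : 𝒳 → ℝ, Measurable f → (∀ x, |f x| ≤ M) →
      |σ ^ 2 * ((∫ ω, ψ ((Y ω - fstar (X ω)) ^ 2 / σ ^ 2) ∂μ) -
              ∫ ω, ψ ((Y ω - f (X ω)) ^ 2 / σ ^ 2) ∂μ) -
          (-ψ' 0) * ∫ ω, (f (X ω) - fstar (X ω)) ^ 2 ∂μ| ≤
        (6 * M * (max (L₂ + (-ψ' 0)) (L₁ / 2) + (-ψ' 0)) *
              (∫ ω, |2 * Y ω| ^ (1 + ε) ∂μ) +
            16 * M * L₂ * ((∫ ω, |Y ω| ^ min (1 + ε) 3 ∂μ) + M ^ 3)) *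
          σ ^ (-min ε 2) := by
  intro f hf hfM
  have hL₂0 : 0 ≤ L₂ := nonneg_of_mul_nonneg_left
    ((abs_nonneg _).trans (hL₂ (1 / 2) ⟨by norm_num, by norm_num⟩ 0 ⟨le_rfl, one_pos⟩))
    (by norm_num)
  have hYi : Integrable Y μ := by
    have h := integrable_abs_rpow_of_le hY.aestronglyMeasurable hmom zero_le_one (by linarith)
    simp only [Real.rpow_one] at h
    exact (integrable_norm_iff hY.aestronglyMeasurable).1 h
  have hgain : ∀ g : 𝒳 → ℝ, Measurable g → (∀ x, |g x| ≤ M) →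
      Integrable (fun ω => gain ψ σ (Y ω - g (X ω))) μ := fun g hg hgM =>
    integrable_gain_comp hL₁ σ (hYi.sub (.of_bound (hg.comp hX).aestronglyMeasurable M
      (ae_of_all _ fun ω => hgM (X ω))))
  obtain ⟨hsqi, hsq⟩ := integral_sub_sq_sub_sub_sq_eq_of_condExp hX.comap_le hYi
    (g := fun ω => fstar (X ω)) (h := fun ω => f (X ω))
    (hfstar.comp (comap_measurable X)).stronglyMeasurable
    (hf.comp (comap_measurable X)).stronglyMeasurable hcond
    (fun ω => (abs_sub _ _).trans (add_le_add (hfM (X ω)) (hfstarM (X ω))))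
  obtain ⟨hBi, hB⟩ := integral_moment_bound hY.aestronglyMeasurable hmom hε.le
    (6 * M * (max (L₂ + -ψ' 0) (L₁ / 2) + -ψ' 0)) (16 * M * L₂) (σ ^ (-min ε 2)) M
  calc _ = ‖∫ ω, (σ ^ 2 * (gain ψ σ (Y ω - fstar (X ω)) - gain ψ σ (Y ω - f (X ω))) -
          -ψ' 0 * ((Y ω - f (X ω)) ^ 2 - (Y ω - fstar (X ω)) ^ 2)) ∂μ‖ := by
        rw [integral_sub, integral_const_mul, integral_const_mul,
          integral_sub (hgain _ hfstar hfstarM) (hgain _ hf hfM), hsq, Real.norm_eq_abs]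
        · rfl
        · exact ((hgain _ hfstar hfstarM).sub (hgain _ hf hfM)).const_mul _
        · exact hsqi.const_mul _
    _ ≤ _ := norm_integral_le_of_norm_le hBi (ae_of_all _ fun ω =>
        abs_sq_mul_gain_sub_sub_le (fun u hu v hv => abs_sub_sub_deriv_zero_mul_le hderiv hL₂ hu hv)
          hL₁ hψ'0.le hL₂0 hε.le hσ (hfstarM (X ω)) (hfM (X ω)))
    _ = _ := hB

/-- Asymptotic mean calibration: for `f* = E(Y|X)` bounded by `M`,
`E|Y|^{1+ε} < ∞`, `σ ≥ max(2M,1)`, and a strongly mean-calibrated gain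
`p_σ(t) = ψ(t²/σ²)` with `c₀ = -ψ'(0)`, every measurable `f` with `‖f‖_∞ ≤ M`
satisfies `|σ²[𝒢_σ(f*) - 𝒢_σ(f)] - c₀‖f - f*‖²_{2,ρ}| ≤ c_ε σ^{-θ_ε}`. -/
theorem stmt13 {Ω 𝒳 : Type*} [MeasurableSpace Ω] [MeasurableSpace 𝒳]
    (μ : Measure Ω) [IsProbabilityMeasure μ]
    (X : Ω → 𝒳) (Y : Ω → ℝ) (hX : Measurable X) (hY : Measurable Y)
    (fstar : 𝒳 → ℝ) (hfstar : Measurable fstar)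
    (hcond : (fun ω => fstar (X ω)) =ᵐ[μ] μ[Y | MeasurableSpace.comap X inferInstance])
    (ψ ψ' : ℝ → ℝ) (hψmeas : Measurable ψ)
    (ε M L₁ L₂ σ : ℝ) (hε : 0 < ε) (hM : 0 < M) (hσ : max (2 * M) 1 ≤ σ)
    (hfstarM : ∀ x, |fstar x| ≤ M)
    (hψ_nonneg : ∀ t, 0 ≤ t → 0 ≤ ψ t)
    (hψ_anti : ∀ u v : ℝ, 0 ≤ u → u ≤ v → ψ v ≤ ψ u)
    (hL₁ : ∀ s t : ℝ, |ψ (s ^ 2) - ψ (t ^ 2)| ≤ L₁ * |s - t|)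
    (hderiv : ∀ t ∈ Set.Ico (0 : ℝ) 1,
      HasDerivWithinAt ψ (ψ' t) (Set.Ico (0 : ℝ) 1) t)
    (hψ'0 : ψ' 0 < 0)
    (hL₂ : ∀ s ∈ Set.Ico (0 : ℝ) 1, ∀ t ∈ Set.Ico (0 : ℝ) 1,
      |ψ' s - ψ' t| ≤ L₂ * |s - t|)
    (hmom : Integrable (fun ω => |Y ω| ^ (1 + ε)) μ) :
    ∀ f : 𝒳 → ℝ, Measurable f → (∀ x, |f x| ≤ M) →
      |σ ^ 2 * ((∫ ω, ψ ((Y ω - fstar (X ω)) ^ 2 / σ ^ 2) ∂μ) -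
              ∫ ω, ψ ((Y ω - f (X ω)) ^ 2 / σ ^ 2) ∂μ) -
          (-ψ' 0) * ∫ ω, (f (X ω) - fstar (X ω)) ^ 2 ∂μ| ≤
        (6 * M * (max (L₂ + (-ψ' 0)) (L₁ / 2) + (-ψ' 0)) *
              (∫ ω, |2 * Y ω| ^ (1 + ε) ∂μ) +
            16 * M * L₂ * ((∫ ω, |Y ω| ^ min (1 + ε) 3 ∂μ) + M ^ 3)) *
          σ ^ (-min ε 2) :=
  stmt13_general μ X Y hX hY fstar hfstar hcond ψ ψ' ε M L₁ L₂ σ hε hσ hfstarM hL₁ hderiv hψ'0 hL₂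
    hmom
end

section
/- Correctly specified noise makes f* a global maximizer: suppose the noise Y - f*(X) has density c_σ·p_σ(·) independent of X, where p_σ is even, integrable, and square integrable. Define V(s) = ∫ p_σ(t-s)p_σ(t)dt. Then 𝒢_σ(f) = c_σ·∫_𝒳 V(f(x) - f*(x)) dρ_X(x), V(s) ≤ V(0) for all s, and hence 𝒢_σ(f) ≤ 𝒢_σ(f*) for every bounded measurable f. -/
/-!
Write `ε = Y - f*(X)`. The density hypothesis says that `(X, ε)` has law `ρ_X ⊗ η`, where `η` has
density `c·p`; by Fubini, `𝒢(f) = ∫∫ p(e - (f - f*)(x)) dη(e) dρ_X(x) = c ∫ V(f - f*) dρ_X`.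
Integrating `2ab ≤ a² + b²` with `a = p(t - s)`, `b = p(t)` gives `V(s) ≤ V(0)`, since translation
preserves `∫ p²`; hence `𝒢(f) ≤ c V(0) = 𝒢(f*)`.
-/

open MeasureTheory

namespace MeasureTheory

variable {Ω α β : Type*} [MeasurableSpace Ω] [MeasurableSpace α] [MeasurableSpace β]

theorem Measure.map_eq_prod_of_measureReal_eq {μ : Measure Ω} [IsFiniteMeasure μ]
    {Z : Ω → α × β} (hZ : Measurable Z) {ρ : Measure α} [IsFiniteMeasure ρ]
    {η : Measure β} [IsFiniteMeasure η]
    (h : ∀ S, MeasurableSet S → μ.real (Z ⁻¹' S) = ∫ x, η.real (Prod.mk x ⁻¹' S) ∂ρ) :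
    μ.map Z = ρ.prod η := by
  ext S hS
  have hslice : Measurable fun x => η (Prod.mk x ⁻¹' S) := measurable_measure_prodMk_left hS
  rw [← ofReal_measureReal, map_measureReal_apply hZ hS, h S hS]
  simp_rw [measureReal_def]
  rw [integral_toReal hslice.aemeasurable (ae_of_all _ fun _ => measure_lt_top η _),
    ← Measure.prod_apply hS, ENNReal.ofReal_toReal (measure_ne_top _ _)]

theorem Measure.quasiMeasurePreserving_snd_sub_comp_fst {G : Type*} [AddGroup G]
    [MeasurableSpace G] [MeasurableAdd G] [MeasurableSub₂ G] (ρ : Measure α) (ν : Measure G)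
    [SFinite ν] [ν.IsAddRightInvariant] {d : α → G} (hd : Measurable d) :
    Measure.QuasiMeasurePreserving (fun z : α × G => z.2 - d z.1) (ρ.prod ν) ν := by
  have hmeas : Measurable fun z : α × G => z.2 - d z.1 :=
    measurable_snd.sub (hd.comp measurable_fst)
  refine ⟨hmeas, Measure.AbsolutelyContinuous.mk fun N hN hN0 => ?_⟩
  rw [Measure.map_apply hmeas hN, Measure.prod_apply (hmeas hN)]
  simp [← Set.preimage_comp, Function.comp_def,
    (measurePreserving_sub_right ν _).measure_preimage hN.nullMeasurableSet, hN0]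

theorem integral_withDensity_ofReal {μ : Measure α} {g : α → ℝ} (hg : AEMeasurable g μ)
    (hg0 : 0 ≤ g) (φ : α → ℝ) :
    ∫ x, φ x ∂μ.withDensity (fun x => ENNReal.ofReal (g x)) = ∫ x, g x * φ x ∂μ := by
  rw [integral_withDensity_eq_integral_toReal_smul₀ hg.ennreal_ofReal
    (ae_of_all _ fun _ => ENNReal.ofReal_lt_top)]
  simp [ENNReal.toReal_ofReal (hg0 _)]

theorem integrable_withDensity_ofReal_iff {μ : Measure α} {g : α → ℝ} (hg : AEMeasurable g μ)
    (hg0 : 0 ≤ g) {φ : α → ℝ} :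
    Integrable φ (μ.withDensity fun x => ENNReal.ofReal (g x)) ↔
      Integrable (fun x => g x * φ x) μ := by
  refine (integrable_withDensity_iff_integrable_smul₀ hg.real_toNNReal).trans ?_
  simp [NNReal.smul_def, Real.coe_toNNReal _ (hg0 _)]

theorem MemLp.integrable_comp_sub_right_mul {p : ℝ → ℝ} (hp : MemLp p 2 volume) (s : ℝ) :
    Integrable (fun t => p (t - s) * p t) :=
  (hp.comp_measurePreserving (measurePreserving_sub_right volume s)).integrable_mul hp

end MeasureTheory

noncomputable def autocorrelation (p : ℝ → ℝ) (s : ℝ) : ℝ := ∫ t, p (t - s) * p t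

section

variable {p : ℝ → ℝ}

theorem autocorrelation_nonneg (hp : 0 ≤ p) (s : ℝ) : 0 ≤ autocorrelation p s :=
  integral_nonneg fun _ => mul_nonneg (hp _) (hp _)

theorem autocorrelation_le_autocorrelation_zero (hp : MemLp p 2 volume) (s : ℝ) :
    autocorrelation p s ≤ autocorrelation p 0 := by
  have hsq_shift : Integrable fun t => p (t - s) ^ 2 :=
    (hp.comp_measurePreserving (measurePreserving_sub_right volume s)).integrable_sq
  have hsq : ∫ t, p (t - s) ^ 2 = ∫ t, p t ^ 2 := integral_sub_right_eq_self (fun t => p t ^ 2) s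
  calc autocorrelation p s ≤ ∫ t, (p (t - s) ^ 2 + p t ^ 2) / 2 :=
        integral_mono (hp.integrable_comp_sub_right_mul s)
          ((hsq_shift.add hp.integrable_sq).div_const 2)
          fun t => by nlinarith [sq_nonneg (p (t - s) - p t)]
    _ = autocorrelation p 0 := by
        rw [integral_div, integral_add hsq_shift hp.integrable_sq, hsq, autocorrelation]
        simp only [sub_zero, ← sq]
        ring

end

def HasConditionalDensity {Ω 𝒳 : Type*} [MeasurableSpace Ω] [MeasurableSpace 𝒳]
    (μ : Measure Ω) (X : Ω → 𝒳) (Y : Ω → ℝ) (k : 𝒳 → ℝ → ℝ) : Prop :=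
  ∀ φ : 𝒳 → ℝ → ℝ, Measurable (Function.uncurry φ) → (∃ C, ∀ x y, |φ x y| ≤ C) →
    ∫ ω, φ (X ω) (Y ω) ∂μ = ∫ x, (∫ y, φ x y * k x y) ∂(μ.map X)

namespace HasConditionalDensity

variable {Ω 𝒳 : Type*} [MeasurableSpace Ω] [MeasurableSpace 𝒳] {μ : Measure Ω} {X : Ω → 𝒳}
  {Y : Ω → ℝ} {fstar : 𝒳 → ℝ} {p : ℝ → ℝ} {c : ℝ}

theorem map_noise_eq_prod [IsFiniteMeasure μ]
    (hdens : HasConditionalDensity μ X Y fun x y => c * p (y - fstar x))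
    (hX : Measurable X) (hY : Measurable Y) (hfstar : Measurable fstar) (hc : 0 ≤ c)
    (hp_nonneg : ∀ t, 0 ≤ p t) (hp_int : Integrable p) :
    μ.map (fun ω => (X ω, Y ω - fstar (X ω))) =
      (μ.map X).prod (volume.withDensity fun t => ENNReal.ofReal (c * p t)) := by
  have hcp : AEMeasurable (fun t => c * p t) := hp_int.1.aemeasurable.const_mul c
  have := isFiniteMeasure_withDensity_ofReal (hp_int.const_mul c).2
  have hnoise : Measurable fun z : 𝒳 × ℝ => (z.1, z.2 - fstar z.1) :=
    measurable_fst.prodMk (measurable_snd.sub (hfstar.comp measurable_fst))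
  have hZ : Measurable fun ω => (X ω, Y ω - fstar (X ω)) := hnoise.comp (hX.prodMk hY)
  refine Measure.map_eq_prod_of_measureReal_eq hZ fun S hS => ?_
  have h := hdens (fun x y => S.indicator 1 (x, y - fstar x))
    ((measurable_const.indicator hS).comp hnoise)
    ⟨1, fun x y => by by_cases hxy : (x, y - fstar x) ∈ S <;> simp [hxy]⟩
  refine (integral_indicator_one (hZ hS)).symm.trans
    (h.trans (integral_congr_ae (ae_of_all _ fun x => ?_)))
  dsimp only
  rw [integral_sub_right_eq_self (fun e => S.indicator 1 (x, e) * (c * p e)) (fstar x),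
    ← integral_indicator_one (measurable_prodMk_left hS),
    integral_withDensity_ofReal hcp fun t => mul_nonneg hc (hp_nonneg t)]
  simp only [mul_comm]
  rfl

theorem integral_comp_sub_eq_mul_integral_autocorrelation [IsFiniteMeasure μ]
    (hdens : HasConditionalDensity μ X Y fun x y => c * p (y - fstar x))
    (hX : Measurable X) (hY : Measurable Y) (hfstar : Measurable fstar) (hc : 0 ≤ c)
    (hp_nonneg : ∀ t, 0 ≤ p t) (hp_int : Integrable p) (hp_sq : MemLp p 2 volume)
    {f : 𝒳 → ℝ} (hf : Measurable f) :
    ∫ ω, p (Y ω - f (X ω)) ∂μ = c * ∫ x, autocorrelation p (f x - fstar x) ∂(μ.map X) := by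
  set ρ := μ.map X
  set η := volume.withDensity fun t => ENNReal.ofReal (c * p t)
  have hcp : AEMeasurable (fun t => c * p t) := hp_int.1.aemeasurable.const_mul c
  have hcp0 : 0 ≤ fun t => c * p t := fun t => mul_nonneg hc (hp_nonneg t)
  set g : 𝒳 × ℝ → ℝ := fun z => p (z.2 - (f z.1 - fstar z.1))
  -- `p` is only a.e. measurable: measurability of `g` comes from the shear being
  -- quasi-measure-preserving
  have hg : AEStronglyMeasurable g (ρ.prod η) :=
    hp_int.1.comp_quasiMeasurePreserving
      ((Measure.quasiMeasurePreserving_snd_sub_comp_fst ρ volume (hf.sub hfstar)).mono_left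
        (Measure.AbsolutelyContinuous.rfl.prod (withDensity_absolutelyContinuous _ _)))
  have hslice : ∀ s, ∫ e, p (e - s) ∂η = c * autocorrelation p s := fun s => by
    rw [integral_withDensity_ofReal hcp hcp0, autocorrelation, ← integral_const_mul]
    congr 1 with t
    ring
  have hslice_int : ∀ s, Integrable (fun e => p (e - s)) η := fun s =>
    (integrable_withDensity_ofReal_iff hcp hcp0).2
      (((hp_sq.integrable_comp_sub_right_mul s).const_mul c).congr
        (ae_of_all _ fun t => by simp only; ring))
  have hg_int : Integrable g (ρ.prod η) := by
    refine (integrable_prod_iff hg).2 ⟨ae_of_all _ fun x => hslice_int (f x - fstar x), ?_⟩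
    refine Integrable.of_bound hg.norm.integral_prod_right' (c * autocorrelation p 0)
      (ae_of_all _ fun x => ?_)
    simp only [g, Real.norm_of_nonneg (hp_nonneg _)]
    rw [hslice, Real.norm_of_nonneg (mul_nonneg hc (autocorrelation_nonneg hp_nonneg _))]
    exact mul_le_mul_of_nonneg_left (autocorrelation_le_autocorrelation_zero hp_sq _) hc
  have hlaw := hdens.map_noise_eq_prod hX hY hfstar hc hp_nonneg hp_int
  have hZ : Measurable fun ω => (X ω, Y ω - fstar (X ω)) := hX.prodMk (hY.sub (hfstar.comp hX))
  calc ∫ ω, p (Y ω - f (X ω)) ∂μ = ∫ ω, g (X ω, Y ω - fstar (X ω)) ∂μ := by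
        simp only [g, sub_sub_sub_cancel_right]
    _ = ∫ z, g z ∂(ρ.prod η) := by
        rw [← hlaw, integral_map hZ.aemeasurable (hlaw ▸ hg)]
    _ = ∫ x, ∫ e, p (e - (f x - fstar x)) ∂η ∂ρ := integral_prod g hg_int
    _ = c * ∫ x, autocorrelation p (f x - fstar x) ∂ρ := by
        simp only [hslice, integral_const_mul]

end HasConditionalDensity

theorem stmt15_general {Ω 𝒳 : Type*} [MeasurableSpace Ω] [MeasurableSpace 𝒳]
    (μ : Measure Ω) [IsProbabilityMeasure μ]
    (X : Ω → 𝒳) (Y : Ω → ℝ) (hX : Measurable X) (hY : Measurable Y)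
    (fstar : 𝒳 → ℝ) (hfstar : Measurable fstar)
    (p : ℝ → ℝ) (c : ℝ) (hc : 0 < c)
    (hp_nonneg : ∀ t, 0 ≤ p t)
    (hp_int : Integrable p) (hp_sq : MemLp p 2 volume)
    (hdens : ∀ φ : 𝒳 → ℝ → ℝ, Measurable (Function.uncurry φ) →
      (∃ C, ∀ x y, |φ x y| ≤ C) →
      ∫ ω, φ (X ω) (Y ω) ∂μ =
        ∫ x, (∫ y, φ x y * (c * p (y - fstar x))) ∂(μ.map X)) :
    (∀ f : 𝒳 → ℝ, Measurable f → (∃ C, ∀ x, |f x| ≤ C) →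
        ∫ ω, p (Y ω - f (X ω)) ∂μ =
          c * ∫ x, (∫ t, p (t - (f x - fstar x)) * p t) ∂(μ.map X)) ∧
      (∀ s : ℝ, (∫ t, p (t - s) * p t) ≤ ∫ t, p (t - 0) * p t) ∧
        ∀ f : 𝒳 → ℝ, Measurable f → (∃ C, ∀ x, |f x| ≤ C) →
          ∫ ω, p (Y ω - f (X ω)) ∂μ ≤ ∫ ω, p (Y ω - fstar (X ω)) ∂μ := by
  have hdens' : HasConditionalDensity μ X Y fun x y => c * p (y - fstar x) := hdens
  have hG (f : 𝒳 → ℝ) (hf : Measurable f) :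
      ∫ ω, p (Y ω - f (X ω)) ∂μ = c * ∫ x, autocorrelation p (f x - fstar x) ∂(μ.map X) :=
    hdens'.integral_comp_sub_eq_mul_integral_autocorrelation hX hY hfstar hc.le hp_nonneg
      hp_int hp_sq hf
  refine ⟨fun f hf _ => hG f hf, autocorrelation_le_autocorrelation_zero hp_sq,
    fun f hf _ => ?_⟩
  rw [hG f hf, hG fstar hfstar]
  simp only [sub_self]
  refine mul_le_mul_of_nonneg_left (integral_mono_of_nonneg
    (ae_of_all _ fun _ => autocorrelation_nonneg hp_nonneg _) (integrable_const _)
    (ae_of_all _ fun _ => autocorrelation_le_autocorrelation_zero hp_sq _)) hc.le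

/-- Correctly specified noise makes `f*` a global maximizer: if the conditional
density of `Y` given `X = x` is `c·p(· - f*(x))` with `p` even, integrable and
square integrable, then with `V(s) = ∫ p(t-s)p(t)dt` one has
`𝒢_σ(f) = c ∫ V(f(x)-f*(x)) dρ_X`, `V(s) ≤ V(0)`, and `𝒢_σ(f) ≤ 𝒢_σ(f*)` for
every bounded measurable `f`. -/
theorem stmt15 {Ω 𝒳 : Type*} [MeasurableSpace Ω] [MeasurableSpace 𝒳]
    (μ : Measure Ω) [IsProbabilityMeasure μ]
    (X : Ω → 𝒳) (Y : Ω → ℝ) (hX : Measurable X) (hY : Measurable Y)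
    (fstar : 𝒳 → ℝ) (hfstar : Measurable fstar) (Mstar : ℝ)
    (hfstarB : ∀ x, |fstar x| ≤ Mstar)
    (p : ℝ → ℝ) (c : ℝ) (hc : 0 < c)
    (hp_nonneg : ∀ t, 0 ≤ p t) (hp_even : ∀ t, p (-t) = p t)
    (hp_int : Integrable p) (hp_sq : MemLp p 2 volume)
    (hp_norm : ∫ t, c * p t = 1)
    (hdens : ∀ φ : 𝒳 → ℝ → ℝ, Measurable (Function.uncurry φ) →
      (∃ C, ∀ x y, |φ x y| ≤ C) →
      ∫ ω, φ (X ω) (Y ω) ∂μ =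
        ∫ x, (∫ y, φ x y * (c * p (y - fstar x))) ∂(μ.map X)) :
    (∀ f : 𝒳 → ℝ, Measurable f → (∃ C, ∀ x, |f x| ≤ C) →
        ∫ ω, p (Y ω - f (X ω)) ∂μ =
          c * ∫ x, (∫ t, p (t - (f x - fstar x)) * p t) ∂(μ.map X)) ∧
      (∀ s : ℝ, (∫ t, p (t - s) * p t) ≤ ∫ t, p (t - 0) * p t) ∧
        ∀ f : 𝒳 → ℝ, Measurable f → (∃ C, ∀ x, |f x| ≤ C) →
          ∫ ω, p (Y ω - f (X ω)) ∂μ ≤ ∫ ω, p (Y ω - fstar (X ω)) ∂μ :=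
  stmt15_general μ X Y hX hY fstar hfstar p c hc hp_nonneg hp_int hp_sq hdens
end

section
/- Upper calibration under correct specification: if in addition p_σ(t) = ψ(t²/σ²) is strongly mean-calibrated, then the autocorrelation V(s) = ∫p_σ(t-s)p_σ(t)dt has V' Lipschitz with constant 2p_σ(0)L₁/σ and V'(0) = 0, and consequently V(0) - V(s) ≤ (2p_σ(0)L₁/σ)·s² for all s, which yields 𝒢_σ(f*) - 𝒢_σ(f) ≤ (2c_σ p_σ(0)L₁/σ)·‖f - f*‖²_{2,ρ}. -/
open MeasureTheory Set Filter

/-!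
Since `p` is even and nonincreasing in `|t|`, the difference `p (u + h) - p u` changes sign only
at `u = -h/2`, so translating each half gives the linear L¹ modulus
`∫ |p (u + h) - p u| ≤ 2 |h| p 0`. The second difference of `V` equals
`∫ (p (u - h) - p u) (p (u + s) - p (u + r))`; bounding the second factor by the Lipschitz
constant `L₁/σ` of `p` and the first by the L¹ modulus makes the slopes of `V` at `s` and `r`
differ by at most `2 p 0 (L₁/σ) |s - r|`. `V` is differentiable (differentiation under the integral,
with `p'` from Rademacher's theorem) and even, so `V' 0 = 0` and the mean value theorem gives
`|V s - V 0| ≤ 2 p 0 (L₁/σ) s²`. Under correct specification the gain of `f` is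
`c 𝔼 V (f X - f* X)`, and the quadratic bound integrates to the last claim.
-/

theorem abs_sub_le_of_hasDerivAt_of_abs_sub_sub_le {f : ℝ → ℝ} {a b f'a f'b K : ℝ}
    (ha : HasDerivAt f f'a a) (hb : HasDerivAt f f'b b)
    (hK : ∀ h, |f (a + h) - f a - (f (b + h) - f b)| ≤ K * |h|) :
    |f'a - f'b| ≤ K := by
  refine le_of_tendsto (ha.tendsto_slope_zero.sub hb.tendsto_slope_zero).abs ?_
  filter_upwards [self_mem_nhdsWithin] with h (hh : h ≠ 0)
  rw [smul_eq_mul, smul_eq_mul, ← mul_sub, abs_mul, abs_inv, inv_mul_le_iff₀ (abs_pos.2 hh),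
    mul_comm]
  exact hK h

theorem abs_sub_le_mul_sq_of_abs_deriv_le {f : ℝ → ℝ} {K : ℝ} (hf : Differentiable ℝ f)
    (hK : ∀ x, |deriv f x| ≤ K * |x|) (s : ℝ) : |f s - f 0| ≤ K * s ^ 2 := by
  have hK₀ : 0 ≤ K := by simpa using (abs_nonneg _).trans (hK 1)
  have hball : ∀ x ∈ Metric.closedBall (0 : ℝ) |s|, ‖deriv f x‖ ≤ K * |s| := fun x hx =>
    (hK x).trans (mul_le_mul_of_nonneg_left (by simpa using hx) hK₀)
  calc |f s - f 0| ≤ K * |s| * |s - 0| :=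
        (convex_closedBall 0 |s|).norm_image_sub_le_of_norm_deriv_le (fun x _ => hf x) hball
          (Metric.mem_closedBall_self (abs_nonneg s)) (by simp)
    _ = K * s ^ 2 := by rw [sub_zero, mul_assoc, abs_mul_abs_self, sq]

theorem integral_abs_comp_add_sub_le_of_nonneg {p : ℝ → ℝ} (hp : Integrable p)
    (hrad : ∀ a b, |a| ≤ |b| → p b ≤ p a) {h : ℝ} (hh : 0 ≤ h) :
    ∫ u, |p (u + h) - p u| ≤ 2 * h * p 0 := by
  obtain ⟨a, ha⟩ : ∃ a : ℝ, a = -(h / 2) := ⟨_, rfl⟩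
  have hph : Integrable fun u => p (u + h) := hp.comp_add_right h
  have hshift : ∀ s : Set ℝ, ∫ u in (· + h) ⁻¹' s, p (u + h) = ∫ u in s, p u :=
    (measurePreserving_add_right volume h).setIntegral_preimage_emb
      (measurableEmbedding_addRight h) p
  have hIic : ∫ u in Iic a, p (u + h) = ∫ u in Iic (a + h), p u := by
    rw [← hshift, preimage_add_const_Iic, add_sub_cancel_right]
  have hIoi : ∫ u in Ioi a, p (u + h) = ∫ u in Ioi (a + h), p u := by
    rw [← hshift, preimage_add_const_Ioi, add_sub_cancel_right]
  have hleft : ∫ u in Iic a, |p (u + h) - p u| = ∫ u in a..a + h, p u := by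
    rw [setIntegral_congr_fun measurableSet_Iic (g := fun u => p (u + h) - p u),
      integral_sub hph.integrableOn hp.integrableOn, hIic,
      intervalIntegral.integral_Iic_sub_Iic hp.integrableOn hp.integrableOn]
    intro u (hu : u ≤ a)
    refine abs_of_nonneg (sub_nonneg.2 (hrad _ _ ?_))
    rw [abs_of_nonpos (by linarith : u ≤ 0)]
    exact abs_le.2 ⟨by linarith, by linarith⟩
  have hright : ∫ u in Ioi a, |p (u + h) - p u| = ∫ u in a..a + h, p u := by
    rw [setIntegral_congr_fun measurableSet_Ioi (g := fun u => p u - p (u + h)),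
      integral_sub hp.integrableOn hph.integrableOn, hIoi,
      intervalIntegral.integral_Ioi_sub_Ioi hp.integrableOn (by linarith)]
    intro u (hu : a < u)
    refine (abs_of_nonpos (sub_nonpos.2 (hrad _ _ ?_))).trans (neg_sub _ _)
    rw [abs_of_nonneg (by linarith : 0 ≤ u + h)]
    exact abs_le.2 ⟨by linarith, by linarith⟩
  have hmiddle : ∫ u in a..a + h, p u ≤ h * p 0 := by
    calc ∫ u in a..a + h, p u ≤ ∫ _ in a..a + h, p 0 :=
          intervalIntegral.integral_mono_on (by linarith) hp.intervalIntegrable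
            intervalIntegrable_const fun u _ => hrad 0 u (by simp)
      _ = h * p 0 := by simp
  have hint : Integrable fun u => |p (u + h) - p u| := (hph.sub hp).abs
  have hsplit : (∫ u in Iic a, |p (u + h) - p u|) + ∫ u in Ioi a, |p (u + h) - p u|
      = ∫ u, |p (u + h) - p u| :=
    intervalIntegral.integral_Iic_add_Ioi hint.integrableOn hint.integrableOn
  linarith

theorem integral_abs_comp_add_sub_le {p : ℝ → ℝ} (hp : Integrable p)
    (hrad : ∀ a b, |a| ≤ |b| → p b ≤ p a) (h : ℝ) :
    ∫ u, |p (u + h) - p u| ≤ 2 * |h| * p 0 := by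
  rcases le_total 0 h with hh | hh
  · rw [abs_of_nonneg hh]
    exact integral_abs_comp_add_sub_le_of_nonneg hp hrad hh
  · have hflip : ∫ u, |p (u + h) - p u| = ∫ u, |p (u + -h) - p u| := by
      rw [← integral_add_right_eq_self _ (-h)]
      simp_rw [neg_add_cancel_right, abs_sub_comm]
    rw [hflip, abs_of_nonpos hh]
    exact integral_abs_comp_add_sub_le_of_nonneg hp hrad (neg_nonneg.2 hh)

noncomputable def autocorr (p : ℝ → ℝ) (s : ℝ) : ℝ := ∫ t, p (t - s) * p t

theorem autocorr_neg (p : ℝ → ℝ) (s : ℝ) : autocorr p (-s) = autocorr p s := by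
  rw [autocorr, autocorr, ← integral_add_right_eq_self (fun t => p (t - s) * p t) s]
  simp_rw [add_sub_cancel_right, sub_neg_eq_add, mul_comm]

theorem deriv_autocorr_zero (p : ℝ → ℝ) : deriv (autocorr p) 0 = 0 := by
  have h := deriv_comp_neg (f := autocorr p) (x := 0)
  simp only [autocorr_neg, neg_zero] at h
  linarith

theorem integral_comp_sub_mul_comp_sub (p : ℝ → ℝ) (a b : ℝ) :
    ∫ y, p (y - b) * p (y - a) = autocorr p (b - a) := by
  rw [autocorr, ← integral_add_right_eq_self (fun y => p (y - b) * p (y - a)) a]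
  simp_rw [add_sub_cancel_right, sub_sub_eq_add_sub]

theorem autocorr_add_sub_autocorr {p : ℝ → ℝ}
    (hI : ∀ s, Integrable fun t => p (t - s) * p t) (w h : ℝ) :
    autocorr p (w + h) - autocorr p w = ∫ u, (p (u - h) - p u) * p (u + w) := by
  rw [autocorr, autocorr, ← integral_sub (hI _) (hI _),
    ← integral_add_right_eq_self (fun t => p (t - (w + h)) * p t - p (t - w) * p t) w]
  congr 1 with u
  rw [show u + w - (w + h) = u - h by ring, add_sub_cancel_right, sub_mul]

section Autocorrelation

variable {p : ℝ → ℝ} {K : NNReal}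

theorem abs_le_apply_zero (hp₀ : ∀ t, 0 ≤ p t) (hrad : ∀ a b, |a| ≤ |b| → p b ≤ p a) (t : ℝ) :
    |p t| ≤ p 0 :=
  (abs_of_nonneg (hp₀ t)).trans_le (hrad 0 t (by simp))

theorem integrable_mul_comp_add (hpc : Continuous p) (hp₀ : ∀ t, 0 ≤ p t)
    (hrad : ∀ a b, |a| ≤ |b| → p b ≤ p a) {g : ℝ → ℝ} (hg : Integrable g) (w : ℝ) :
    Integrable fun u => g u * p (u + w) :=
  hg.mul_bdd (hpc.comp (continuous_add_const w)).aestronglyMeasurable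
    (ae_of_all _ fun _ => abs_le_apply_zero hp₀ hrad _)

theorem integrable_comp_sub_mul (hpL : LipschitzWith K p) (hp : Integrable p)
    (hp₀ : ∀ t, 0 ≤ p t) (hrad : ∀ a b, |a| ≤ |b| → p b ≤ p a) (s : ℝ) :
    Integrable fun t => p (t - s) * p t := by
  simpa using integrable_mul_comp_add hpL.continuous hp₀ hrad (hp.comp_sub_right s) 0

theorem abs_autocorr_second_diff_le (hpL : LipschitzWith K p) (hp : Integrable p)
    (hp₀ : ∀ t, 0 ≤ p t) (hrad : ∀ a b, |a| ≤ |b| → p b ≤ p a) (s r h : ℝ) :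
    |autocorr p (s + h) - autocorr p s - (autocorr p (r + h) - autocorr p r)|
      ≤ 2 * p 0 * K * |s - r| * |h| := by
  have hI := integrable_comp_sub_mul hpL hp hp₀ hrad
  have hΔ : Integrable fun u => p (u - h) - p u := (hp.comp_sub_right h).sub hp
  rw [autocorr_add_sub_autocorr hI, autocorr_add_sub_autocorr hI, ← integral_sub
    (integrable_mul_comp_add hpL.continuous hp₀ hrad hΔ s) (integrable_mul_comp_add hpL.continuous hp₀ hrad hΔ r)]
  calc |∫ u, ((p (u - h) - p u) * p (u + s) - (p (u - h) - p u) * p (u + r))|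
      ≤ ∫ u, |p (u - h) - p u| * ((K : ℝ) * |s - r|) := by
        rw [← Real.norm_eq_abs]
        refine norm_integral_le_of_norm_le (hΔ.abs.mul_const _) (ae_of_all _ fun u => ?_)
        rw [← mul_sub, norm_mul, Real.norm_eq_abs]
        gcongr
        simpa [Real.dist_eq] using hpL.dist_le_mul (u + s) (u + r)
    _ = (∫ u, |p (u - h) - p u|) * ((K : ℝ) * |s - r|) := integral_mul_const _ _
    _ ≤ 2 * |h| * p 0 * ((K : ℝ) * |s - r|) := by
        gcongr
        simpa only [← sub_eq_add_neg, abs_neg] using integral_abs_comp_add_sub_le hp hrad (-h)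
    _ = 2 * p 0 * K * |s - r| * |h| := by ring

theorem differentiable_autocorr (hpL : LipschitzWith K p) (hp : Integrable p)
    (hp₀ : ∀ t, 0 ≤ p t) (hrad : ∀ a b, |a| ≤ |b| → p b ≤ p a) :
    Differentiable ℝ (autocorr p) := by
  intro s₀
  have hI := integrable_comp_sub_mul hpL hp hp₀ hrad
  have hdiff : ∀ᵐ t, DifferentiableAt ℝ p (t - s₀) :=
    (measurePreserving_sub_right volume s₀).quasiMeasurePreserving.ae hpL.ae_differentiableAt
  refine (hasDerivAt_integral_of_dominated_loc_of_lip (F := fun s t => p (t - s) * p t)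
    (F' := fun t => -deriv p (t - s₀) * p t) (bound := fun t => (K : ℝ) * |p t|) (s := univ)
    univ_mem (Eventually.of_forall fun s => (hI s).aestronglyMeasurable) (hI s₀)
    ((((measurable_deriv p).comp (measurable_sub_const s₀)).neg.mul
      hpL.continuous.measurable).aestronglyMeasurable)
    (ae_of_all _ fun t => LipschitzOnWith.of_dist_le_mul fun x _ y _ => ?_)
    (hp.abs.const_mul K) ?_).2.differentiableAt
  · rw [Real.dist_eq, Real.dist_eq, ← sub_mul, abs_mul, Real.coe_nnabs, abs_mul, NNReal.abs_eq,
      abs_abs, mul_right_comm]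
    gcongr
    simpa only [dist_sub_left, Real.dist_eq] using hpL.dist_le_mul (t - x) (t - y)
  · filter_upwards [hdiff] with t ht
    simpa using (ht.hasDerivAt.comp s₀ ((hasDerivAt_id s₀).const_sub t)).mul_const (p t)

theorem abs_deriv_autocorr_sub_le (hpL : LipschitzWith K p)
    (hp : Integrable p) (hp₀ : ∀ t, 0 ≤ p t) (hrad : ∀ a b, |a| ≤ |b| → p b ≤ p a) (s r : ℝ) :
    |deriv (autocorr p) s - deriv (autocorr p) r| ≤ 2 * p 0 * K * |s - r| := by
  have hV := differentiable_autocorr hpL hp hp₀ hrad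
  exact abs_sub_le_of_hasDerivAt_of_abs_sub_sub_le (hV s).hasDerivAt (hV r).hasDerivAt
    (abs_autocorr_second_diff_le hpL hp hp₀ hrad s r)

theorem abs_autocorr_sub_autocorr_zero_le (hpL : LipschitzWith K p)
    (hp : Integrable p) (hp₀ : ∀ t, 0 ≤ p t) (hrad : ∀ a b, |a| ≤ |b| → p b ≤ p a) (s : ℝ) :
    |autocorr p s - autocorr p 0| ≤ 2 * p 0 * K * s ^ 2 := by
  refine abs_sub_le_mul_sq_of_abs_deriv_le (differentiable_autocorr hpL hp hp₀ hrad)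
    (fun x => ?_) s
  simpa [deriv_autocorr_zero] using abs_deriv_autocorr_sub_le hpL hp hp₀ hrad x 0

end Autocorrelation

theorem lipschitzWith_comp_sq_div_sq {ψ : ℝ → ℝ} {L σ : ℝ} (hσ : 0 < σ)
    (hψ : ∀ u v : ℝ, |ψ (u ^ 2) - ψ (v ^ 2)| ≤ L * |u - v|) :
    LipschitzWith (L / σ).toNNReal fun t => ψ (t ^ 2 / σ ^ 2) := by
  have hL : 0 ≤ L := by simpa using (abs_nonneg _).trans (hψ 1 0)
  refine LipschitzWith.of_dist_le_mul fun a b => ?_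
  rw [Real.coe_toNNReal _ (div_nonneg hL hσ.le), Real.dist_eq, Real.dist_eq, ← div_pow, ← div_pow]
  calc |ψ ((a / σ) ^ 2) - ψ ((b / σ) ^ 2)| ≤ L * |a / σ - b / σ| := hψ _ _
    _ = L / σ * |a - b| := by rw [← sub_div, abs_div, abs_of_pos hσ]; ring

theorem sub_integral_comp_le_mul_integral_sq {𝒳 : Type*} [MeasurableSpace 𝒳] (ρ : Measure 𝒳)
    [IsProbabilityMeasure ρ] {V : ℝ → ℝ} (hV : Continuous V) {K : ℝ}
    (hK : ∀ s, |V s - V 0| ≤ K * s ^ 2) {Δ : 𝒳 → ℝ} (hΔ : Measurable Δ)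
    (hΔb : ∃ C, ∀ x, |Δ x| ≤ C) :
    V 0 - ∫ x, V (Δ x) ∂ρ ≤ K * ∫ x, Δ x ^ 2 ∂ρ := by
  obtain ⟨C, hC⟩ := hΔb
  have hsq : Integrable (fun x => Δ x ^ 2) ρ :=
    Integrable.of_bound (hΔ.pow_const 2).aestronglyMeasurable (C ^ 2) (ae_of_all _ fun x => by
      simpa [sq_abs] using pow_le_pow_left₀ (abs_nonneg _) (hC x) 2)
  have hsub : Integrable (fun x => V (Δ x) - V 0) ρ :=
    (hsq.const_mul K).mono' ((hV.measurable.comp hΔ).sub_const _).aestronglyMeasurable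
      (ae_of_all _ fun x => hK (Δ x))
  have hVΔ : Integrable (fun x => V (Δ x)) ρ :=
    (hsub.add (integrable_const (V 0))).congr (ae_of_all _ fun x => sub_add_cancel _ _)
  rw [← integral_const_mul, sub_le_iff_le_add, ← integral_add (hsq.const_mul K) hVΔ]
  calc V 0 = ∫ _, V 0 ∂ρ := by simp
    _ ≤ ∫ x, (K * Δ x ^ 2 + V (Δ x)) ∂ρ :=
        integral_mono (integrable_const _) ((hsq.const_mul K).add hVΔ) fun x => by
          linarith [(abs_le.1 (hK (Δ x))).1]

theorem integral_comp_sub_eq_integral_autocorr {Ω 𝒳 : Type*} [MeasurableSpace Ω]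
    [MeasurableSpace 𝒳] {μ : Measure Ω} {X : Ω → 𝒳} {Y : Ω → ℝ} {fstar : 𝒳 → ℝ} {p : ℝ → ℝ}
    {c : ℝ} (hdens : ∀ φ : 𝒳 → ℝ → ℝ, Measurable (Function.uncurry φ) →
      (∃ C, ∀ x y, |φ x y| ≤ C) →
      ∫ ω, φ (X ω) (Y ω) ∂μ = ∫ x, (∫ y, φ x y * (c * p (y - fstar x))) ∂(μ.map X))
    (hp : Measurable p) {C : ℝ} (hpC : ∀ t, |p t| ≤ C) {g : 𝒳 → ℝ} (hg : Measurable g) :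
    ∫ ω, p (Y ω - g (X ω)) ∂μ = ∫ x, c * autocorr p (g x - fstar x) ∂(μ.map X) := by
  rw [hdens (fun x y => p (y - g x)) (hp.comp (measurable_snd.sub (hg.comp measurable_fst)))
    ⟨C, fun _ _ => hpC _⟩]
  congr 1 with x
  simp_rw [mul_left_comm _ c]
  rw [integral_const_mul, integral_comp_sub_mul_comp_sub]

theorem stmt17_general {Ω 𝒳 : Type*} [MeasurableSpace Ω] [MeasurableSpace 𝒳]
    (μ : Measure Ω) [IsProbabilityMeasure μ]
    (X : Ω → 𝒳) (Y : Ω → ℝ) (hX : Measurable X)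
    (fstar : 𝒳 → ℝ) (hfstar : Measurable fstar) (Mstar : ℝ)
    (hfstarB : ∀ x, |fstar x| ≤ Mstar)
    (ψ : ℝ → ℝ) (σ : ℝ) (hσ : 0 < σ) (p : ℝ → ℝ)
    (hpψ : ∀ t, p t = ψ (t ^ 2 / σ ^ 2))
    (c : ℝ) (hc : 0 < c)
    (hp_nonneg : ∀ t, 0 ≤ p t)
    (hψ_anti : ∀ u v : ℝ, 0 ≤ u → u ≤ v → ψ v ≤ ψ u)
    (L₁ : ℝ) (hψL₁ : ∀ u v : ℝ, |ψ (u ^ 2) - ψ (v ^ 2)| ≤ L₁ * |u - v|)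
    (hp_int : Integrable p)
    (hdens : ∀ φ : 𝒳 → ℝ → ℝ, Measurable (Function.uncurry φ) →
      (∃ C, ∀ x y, |φ x y| ≤ C) →
      ∫ ω, φ (X ω) (Y ω) ∂μ =
        ∫ x, (∫ y, φ x y * (c * p (y - fstar x))) ∂(μ.map X))
    (V : ℝ → ℝ) (hV : ∀ s, V s = ∫ t, p (t - s) * p t) :
    (∀ s t : ℝ, |deriv V s - deriv V t| ≤ 2 * p 0 * L₁ / σ * |s - t|) ∧
      deriv V 0 = 0 ∧
        (∀ s : ℝ, V 0 - V s ≤ 2 * p 0 * L₁ / σ * s ^ 2) ∧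
          ∀ f : 𝒳 → ℝ, Measurable f → (∃ C, ∀ x, |f x| ≤ C) →
            (∫ ω, p (Y ω - fstar (X ω)) ∂μ) - (∫ ω, p (Y ω - f (X ω)) ∂μ) ≤
              2 * c * p 0 * L₁ / σ *
                ∫ ω, (f (X ω) - fstar (X ω)) ^ 2 ∂μ := by
  obtain rfl : V = autocorr p := funext hV
  have hrad : ∀ a b, |a| ≤ |b| → p b ≤ p a := fun a b hab => by
    rw [hpψ, hpψ]
    exact hψ_anti _ _ (by positivity) (div_le_div_of_nonneg_right (sq_le_sq.2 hab) (sq_nonneg σ))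
  have hpL : LipschitzWith (L₁ / σ).toNNReal p := by
    simpa only [← funext hpψ] using lipschitzWith_comp_sq_div_sq hσ hψL₁
  have hK : ((L₁ / σ).toNNReal : ℝ) = L₁ / σ :=
    Real.coe_toNNReal _ (div_nonneg (by simpa using (abs_nonneg _).trans (hψL₁ 1 0)) hσ.le)
  have hquad := abs_autocorr_sub_autocorr_zero_le hpL hp_int hp_nonneg hrad
  refine ⟨fun s t => ?_, deriv_autocorr_zero p, fun s => ?_, fun f hf hfB => ?_⟩
  · simpa only [hK, ← mul_div_assoc] using abs_deriv_autocorr_sub_le hpL hp_int hp_nonneg hrad s t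
  · rw [mul_div_assoc, ← hK]
    exact (le_abs_self _).trans ((abs_sub_comm _ _).trans_le (hquad s))
  have := Measure.isProbabilityMeasure_map (μ := μ) hX.aemeasurable
  have hgain {g : 𝒳 → ℝ} (hg : Measurable g) :=
    integral_comp_sub_eq_integral_autocorr hdens hpL.continuous.measurable
      (abs_le_apply_zero hp_nonneg hrad) hg
  obtain ⟨C, hC⟩ := hfB
  have hsq : ∫ ω, (f (X ω) - fstar (X ω)) ^ 2 ∂μ = ∫ x, (f x - fstar x) ^ 2 ∂(μ.map X) :=
    (integral_map (f := fun x => (f x - fstar x) ^ 2) hX.aemeasurable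
      ((hf.sub hfstar).pow_const 2).aestronglyMeasurable).symm
  rw [hgain hf, hgain hfstar, hsq]
  simp only [sub_self, integral_const, probReal_univ, one_smul, integral_const_mul]
  rw [← mul_sub]
  calc _ ≤ c * (2 * p 0 * (L₁ / σ).toNNReal * ∫ x, (f x - fstar x) ^ 2 ∂(μ.map X)) :=
        mul_le_mul_of_nonneg_left (sub_integral_comp_le_mul_integral_sq _
          (differentiable_autocorr hpL hp_int hp_nonneg hrad).continuous hquad (hf.sub hfstar)
          ⟨C + Mstar, fun x => (abs_sub _ _).trans (add_le_add (hC x) (hfstarB x))⟩) hc.le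
    _ = _ := by rw [hK]; ring

/-- Upper calibration under correct specification: with a strongly
mean-calibrated gain `p(t) = ψ(t²/σ²)` serving (up to norming `c`) as the noise
density, the autocorrelation `V(s) = ∫ p(t-s)p(t)dt` has `V'` Lipschitz with
constant `2p(0)L₁/σ` and `V'(0) = 0`, hence `V(0) - V(s) ≤ (2p(0)L₁/σ)s²`, and
consequently `𝒢_σ(f*) - 𝒢_σ(f) ≤ (2c p(0) L₁/σ)‖f-f*‖²_{2,ρ}`. -/
theorem stmt17 {Ω 𝒳 : Type*} [MeasurableSpace Ω] [MeasurableSpace 𝒳]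
    (μ : Measure Ω) [IsProbabilityMeasure μ]
    (X : Ω → 𝒳) (Y : Ω → ℝ) (hX : Measurable X) (hY : Measurable Y)
    (fstar : 𝒳 → ℝ) (hfstar : Measurable fstar) (Mstar : ℝ)
    (hfstarB : ∀ x, |fstar x| ≤ Mstar)
    (ψ : ℝ → ℝ) (σ : ℝ) (hσ : 0 < σ) (p : ℝ → ℝ)
    (hpψ : ∀ t, p t = ψ (t ^ 2 / σ ^ 2))
    (c : ℝ) (hc : 0 < c)
    (hp_nonneg : ∀ t, 0 ≤ p t)
    (hψ_anti : ∀ u v : ℝ, 0 ≤ u → u ≤ v → ψ v ≤ ψ u)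
    (L₁ : ℝ) (hψL₁ : ∀ u v : ℝ, |ψ (u ^ 2) - ψ (v ^ 2)| ≤ L₁ * |u - v|)
    (hp_int : Integrable p) (hp_sq : MemLp p 2 volume)
    (hp_norm : ∫ t, c * p t = 1)
    (hdens : ∀ φ : 𝒳 → ℝ → ℝ, Measurable (Function.uncurry φ) →
      (∃ C, ∀ x y, |φ x y| ≤ C) →
      ∫ ω, φ (X ω) (Y ω) ∂μ =
        ∫ x, (∫ y, φ x y * (c * p (y - fstar x))) ∂(μ.map X))
    (V : ℝ → ℝ) (hV : ∀ s, V s = ∫ t, p (t - s) * p t) :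
    (∀ s t : ℝ, |deriv V s - deriv V t| ≤ 2 * p 0 * L₁ / σ * |s - t|) ∧
      deriv V 0 = 0 ∧
        (∀ s : ℝ, V 0 - V s ≤ 2 * p 0 * L₁ / σ * s ^ 2) ∧
          ∀ f : 𝒳 → ℝ, Measurable f → (∃ C, ∀ x, |f x| ≤ C) →
            (∫ ω, p (Y ω - fstar (X ω)) ∂μ) - (∫ ω, p (Y ω - f (X ω)) ∂μ) ≤
              2 * c * p 0 * L₁ / σ *
                ∫ ω, (f (X ω) - fstar (X ω)) ^ 2 ∂μ :=
  stmt17_general μ X Y hX fstar hfstar Mstar hfstarB ψ σ hσ p hpψ c hc hp_nonneg hψ_anti L₁ hψL₁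
    hp_int hdens V hV
end
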